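/- arXiv:math/9912113 — 5 statements merged into one kernel-verified Lean document; each statement's English description precedes it below -/
import Mathlib

section
/- Ryde's formula: for a function f defined on the q-lattice and x ≠ 0, the n-th iterated q-derivative satisfies (∂^n f)(x) = (1-q)^{-n} x^{-n} Σ_{k=0}^{n} (-1)^k [n choose k]_q q^{-k(n-k)} q^{-k(k-1)/2} f(q^k x). -/
open scoped BigOperators

noncomputable section

/-- finite q-Pochhammer symbol `(a;q)_k` -/
def qPoch (q a : ℝ) (k : ℕ) : ℝ := ∏ j ∈ Finset.range k, (1 - a * q ^ j)

/-- infinite q-Pochhammer symbol `(a;q)_∞` -/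
def qPochInf (q a : ℝ) : ℝ := ∏' j : ℕ, (1 - a * q ^ j)

/-- q-integral over the lattice `L(γ) = {± q^k γ}` -/
def qInt (q γ : ℝ) (f : ℝ → ℝ) : ℝ :=
  (1 - q) * ∑' k : ℤ, (q ^ k * γ) * (f (q ^ k * γ) + f (-(q ^ k * γ)))

/-- k-th q-moment -/
def qMoment (q γ : ℝ) (e : ℕ) (f : ℝ → ℝ) : ℝ :=
  q ^ (e * (e + 1) / 2) * qInt q γ (fun x => f x * x ^ e)

/-- k-th strict q-moment -/
def qNu (q γ : ℝ) (e : ℕ) (f : ℝ → ℝ) : ℝ :=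
  q ^ (e * (e + 1) / 2) * qInt q γ (fun x => |f x * x ^ e|)

/-- q-derivative -/
def qDeriv (q : ℝ) (f : ℝ → ℝ) : ℝ → ℝ := fun x => (f x - f (q * x)) / ((1 - q) * x)

/-- q-factorial `[e]_q!` -/
def qFact (q : ℝ) (e : ℕ) : ℝ := qPoch q q e / (1 - q) ^ e

/-- q-binomial coefficient -/
def qBinom (q : ℝ) (n k : ℕ) : ℝ := qPoch q q n / (qPoch q q k * qPoch q q (n - k))

/-- q-convolution -/
def qConv (q γ : ℝ) (f g : ℝ → ℝ) : ℝ → ℝ :=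
  fun x => ∑' e : ℕ, (-1) ^ e * qMoment q γ e f / qFact q e * (qDeriv q)^[e] g x

/-- the q-Gaussian `e_{q²}(-x²)` -/
def qGauss (q : ℝ) : ℝ → ℝ := fun x => 1 / qPochInf (q ^ 2) (-(x ^ 2))

/-- discrete q-Hermite II polynomials -/
def qHermiteII (q : ℝ) (k : ℕ) (x : ℝ) : ℝ :=
  qPoch q q k * ∑ l ∈ Finset.range (k / 2 + 1),
    (-1) ^ l * q ^ (2 * l ^ 2 + l) / q ^ (2 * l * k) * x ^ (k - 2 * l) /
      (qPoch (q ^ 2) (q ^ 2) l * qPoch q q (k - 2 * l))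

/-- discrete delta function on the lattice, supported at `η γ q^p` -/
def qdelta (q γ η : ℝ) (p : ℤ) : ℝ → ℝ := fun x => if x = η * γ * q ^ p then 1 else 0

/-!
Write `∂ⁿ f x = Sₙ(x) / ((1 - q) x)ⁿ` with `Sₙ(x) = ∑ₖ cₙₖ f(qᵏ x)`. Unfolding one more
q-derivative gives `Sₙ₊₁(x) = Sₙ(x) - q⁻ⁿ Sₙ(q x)`, which on coefficients reads
`cₙ₊₁,ₖ₊₁ = cₙ,ₖ₊₁ - q⁻ⁿ cₙₖ`: this is the q-Pascal rule
`[n+1, k+1]_q = q^(k+1) [n, k+1]_q + [n, k]_q` together with the identity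
`e(n+1, k+1) = e(n, k) + n` for the exponent `e(n, k) = k(n-k) + k(k-1)/2`.
-/

open Finset

namespace Ryde

variable {q : ℝ}

lemma one_sub_pow_ne_zero (hq : ¬IsOfFinOrder q) {j : ℕ} (hj : 0 < j) : 1 - q ^ j ≠ 0 :=
  fun h => hq (isOfFinOrder_iff_pow_eq_one.mpr ⟨j, hj, by linarith⟩)

lemma not_isOfFinOrder_of_mem_Ioo (hq : q ∈ Set.Ioo (0 : ℝ) 1) : ¬IsOfFinOrder q := by
  rw [isOfFinOrder_iff_pow_eq_one]
  rintro ⟨j, hj, hqj⟩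
  exact (pow_lt_one₀ hq.1.le hq.2 hj.ne').ne hqj

lemma qPoch_zero (q a : ℝ) : qPoch q a 0 = 1 := prod_range_zero _

lemma qPoch_self_succ (q : ℝ) (k : ℕ) : qPoch q q (k + 1) = qPoch q q k * (1 - q ^ (k + 1)) := by
  rw [qPoch, prod_range_succ, pow_succ']
  rfl

lemma qPoch_self_ne_zero (hq : ¬IsOfFinOrder q) (k : ℕ) : qPoch q q k ≠ 0 :=
  prod_ne_zero_iff.mpr fun j _ => by
    rw [← pow_succ']
    exact one_sub_pow_ne_zero hq j.succ_pos

lemma qBinom_zero_right (hq : ¬IsOfFinOrder q) (n : ℕ) : qBinom q n 0 = 1 := by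
  simp [qBinom, qPoch_zero, qPoch_self_ne_zero hq n]

lemma qBinom_self (hq : ¬IsOfFinOrder q) (n : ℕ) : qBinom q n n = 1 := by
  simp [qBinom, qPoch_zero, qPoch_self_ne_zero hq n]

lemma qBinom_succ_succ (hq : ¬IsOfFinOrder q) {n k : ℕ} (hk : k < n) :
    qBinom q (n + 1) (k + 1) = q ^ (k + 1) * qBinom q n (k + 1) + qBinom q n k := by
  obtain ⟨m, rfl⟩ : ∃ m, n = k + 1 + m := ⟨n - (k + 1), by omega⟩
  unfold qBinom
  rw [show k + 1 + m + 1 - (k + 1) = m + 1 by omega, show k + 1 + m - (k + 1) = m by omega,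
    show k + 1 + m - k = m + 1 by omega, qPoch_self_succ q (k + 1 + m), qPoch_self_succ q m,
    qPoch_self_succ q k, show k + 1 + m + 1 = (k + 1) + (m + 1) by ring, pow_add]
  have := qPoch_self_ne_zero hq k
  have := qPoch_self_ne_zero hq m
  have := one_sub_pow_ne_zero hq k.succ_pos
  have := one_sub_pow_ne_zero hq m.succ_pos
  field_simp
  ring

def coeff (q : ℝ) (n k : ℕ) : ℝ :=
  (-1) ^ k * qBinom q n k / (q ^ (k * (n - k)) * q ^ (k * (k - 1) / 2))

lemma coeff_zero_right (hq : ¬IsOfFinOrder q) (n : ℕ) : coeff q n 0 = 1 := by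
  simp [coeff, qBinom_zero_right hq]

lemma succ_mul_div_two (k : ℕ) : (k + 1) * k / 2 = k * (k - 1) / 2 + k := by
  rcases k with _ | k
  · rfl
  · rw [show (k + 1 + 1) * (k + 1) = (k + 1) * k + 2 * (k + 1) by ring,
      Nat.add_mul_div_left _ _ two_pos, Nat.add_sub_cancel]

lemma coeff_succ_self (hq : ¬IsOfFinOrder q) (hq₀ : q ≠ 0) (n : ℕ) :
    coeff q (n + 1) (n + 1) = -(coeff q n n / q ^ n) := by
  simp only [coeff, qBinom_self hq, Nat.sub_self, Nat.add_sub_cancel, succ_mul_div_two,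
    pow_add, pow_succ, mul_zero, pow_zero]
  field_simp

lemma coeff_succ_succ (hq : ¬IsOfFinOrder q) (hq₀ : q ≠ 0) {n k : ℕ} (hk : k < n) :
    coeff q (n + 1) (k + 1) = coeff q n (k + 1) - coeff q n k / q ^ n := by
  simp only [coeff]
  rw [qBinom_succ_succ hq hk]
  obtain ⟨m, rfl⟩ : ∃ m, n = k + 1 + m := ⟨n - (k + 1), by omega⟩
  rw [show k + 1 + m + 1 - (k + 1) = m + 1 by omega, show k + 1 + m - (k + 1) = m by omega,
    show k + 1 + m - k = m + 1 by omega, Nat.add_sub_cancel, succ_mul_div_two,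
    show (k + 1) * (m + 1) = k * m + k + m + 1 by ring, show (k + 1) * m = k * m + m by ring,
    show k * (m + 1) = k * m + k by ring, show k + 1 + m = k + m + 1 by ring]
  simp only [pow_add, pow_succ]
  field_simp
  ring

def sum (q : ℝ) (f : ℝ → ℝ) (n : ℕ) (x : ℝ) : ℝ :=
  ∑ k ∈ range (n + 1), coeff q n k * f (q ^ k * x)

lemma sum_succ (hq : ¬IsOfFinOrder q) (hq₀ : q ≠ 0) (f : ℝ → ℝ) (n : ℕ) (x : ℝ) :
    sum q f (n + 1) x = sum q f n x - sum q f n (q * x) / q ^ n := by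
  have hshift : ∀ k, q ^ k * (q * x) = q ^ (k + 1) * x := fun k => by ring
  simp only [sum, hshift]
  rw [sum_range_succ', sum_range_succ, sum_range_succ' _ n, sum_range_succ _ n,
    coeff_succ_self hq hq₀, coeff_zero_right hq, coeff_zero_right hq,
    sum_congr rfl fun k hk => by rw [coeff_succ_succ hq hq₀ (mem_range.mp hk)]]
  simp only [sub_mul, sum_sub_distrib, div_mul_eq_mul_div, ← sum_div]
  ring

lemma iterate_qDeriv_eq_sum (hq : ¬IsOfFinOrder q) (hq₀ : q ≠ 0) (f : ℝ → ℝ) (n : ℕ) {x : ℝ}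
    (hx : x ≠ 0) : (qDeriv q)^[n] f x = sum q f n x / ((1 - q) * x) ^ n := by
  induction n generalizing x with
  | zero => simp [sum, coeff_zero_right hq]
  | succ n ih =>
    have h1q : 1 - q ≠ 0 := by simpa using one_sub_pow_ne_zero hq one_pos
    rw [Function.iterate_succ_apply', qDeriv, ih hx, ih (mul_ne_zero hq₀ hx), sum_succ hq hq₀,
      mul_left_comm, mul_pow q]
    field_simp
    ring

end Ryde

/-- Ryde's formula for iterated q-derivatives. -/
theorem stmt1 (q : ℝ) (hq : q ∈ Set.Ioo (0 : ℝ) 1) (f : ℝ → ℝ) (n : ℕ) (x : ℝ) (hx : x ≠ 0) :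
    (qDeriv q)^[n] f x =
      (1 / ((1 - q) ^ n * x ^ n)) *
        ∑ k ∈ Finset.range (n + 1),
          (-1) ^ k * qBinom q n k / (q ^ (k * (n - k)) * q ^ (k * (k - 1) / 2)) *
            f (q ^ k * x) := by
  rw [Ryde.iterate_qDeriv_eq_sum (Ryde.not_isOfFinOrder_of_mem_Ioo hq) hq.1.ne' f n hx,
    Ryde.sum, mul_pow, one_div_mul_eq_div]
  rfl
end
end

section
/- For ε, η ∈ {±1} and s, t, l ∈ ℤ with l ≤ s, the q-convolution of discrete delta functions satisfies (δ_{εγq^t} *_γ δ_{ηγq^s})(θγq^l) = [θ=η] · γ(1-q) q^{(t+s-l)+(s-l)(t-l)} (ηε)^{s-l} (ηε q^{t-l+1}; q)_∞ / (q;q)_{s-l}. In particular, when l > t and η = ε the product vanishes, and for l ≤ min(s,t) with η = ε one has (δ_{ηγq^t} *_γ δ_{ηγq^s})(θγq^l) = [θ=η] · γ(1-q)(q;q)_∞ q^{(t+s-l)+(s-l)(t-l)} / ((q;q)_{s-l}(q;q)_{t-l}), which is symmetric in s and t; hence two discrete delta functions with supports of the same sign commute under q-convolution. -/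
open scoped BigOperators

noncomputable section

namespace QAux
open Filter Real Topology

variable {q : ℝ}

lemma qPoch_succ (a : ℝ) (n : ℕ) : qPoch q a (n + 1) = qPoch q a n * (1 - a * q ^ n) :=
  Finset.prod_range_succ _ _

lemma qPoch_zero (a : ℝ) : qPoch q a 0 = 1 := rfl

lemma qPoch_pos (hq0 : 0 < q) (hq1 : q < 1) (n : ℕ) : 0 < qPoch q q n := by
  apply Finset.prod_pos
  intro j _
  have h1 : q * q ^ j ≤ q * 1 := by
    apply mul_le_mul_of_nonneg_left _ hq0.le
    exact pow_le_one₀ hq0.le hq1.le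
  nlinarith

lemma qPoch_ne (hq0 : 0 < q) (hq1 : q < 1) (n : ℕ) : qPoch q q n ≠ 0 :=
  (qPoch_pos hq0 hq1 n).ne'

lemma qPoch_le_one (hq0 : 0 < q) (hq1 : q < 1) (n : ℕ) : qPoch q q n ≤ 1 := by
  induction n with
  | zero => simp [qPoch_zero]
  | succ n ih =>
    rw [qPoch_succ]
    have h2 : (0:ℝ) < q * q ^ n := by positivity
    nlinarith [qPoch_pos hq0 hq1 n]

lemma qPoch_anti (hq0 : 0 < q) (hq1 : q < 1) {n m : ℕ} (h : n ≤ m) :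
    qPoch q q m ≤ qPoch q q n := by
  induction m with
  | zero => simp_all
  | succ m ih =>
    rcases Nat.lt_or_ge n (m+1) with h' | h'
    · have := ih (by omega)
      rw [qPoch_succ]
      have h2 : (0:ℝ) < q * q ^ m := by positivity
      have h3 : q * q ^ m ≤ q * 1 := by
        apply mul_le_mul_of_nonneg_left _ hq0.le
        exact pow_le_one₀ hq0.le hq1.le
      nlinarith [qPoch_pos hq0 hq1 m]
    · have : n = m + 1 := le_antisymm h h'
      simp [this]

/-- |log (1+x)| ≤ 2 |x| for |x| ≤ 1/2 -/
lemma abs_log_one_add_le {x : ℝ} (hx : |x| ≤ 1/2) : |Real.log (1 + x)| ≤ 2 * |x| := by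
  have hx1 : -(1/2) ≤ x := by cases abs_le.mp hx; linarith
  have hx2 : x ≤ 1/2 := by cases abs_le.mp hx; linarith
  have hpos : (0:ℝ) < 1 + x := by linarith
  rw [abs_le]
  constructor
  · have h1 : Real.log (1 + x)⁻¹ ≤ (1 + x)⁻¹ - 1 := Real.log_le_sub_one_of_pos (by positivity)
    rw [Real.log_inv] at h1
    have h2 : (1 + x)⁻¹ - 1 = -x / (1 + x) := by field_simp; ring
    rw [h2] at h1
    have h3 : x / (1 + x) ≤ Real.log (1 + x) := by
      have := neg_le_neg h1; rw [neg_neg] at this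
      calc x / (1+x) = -(-x/(1+x)) := by ring
      _ ≤ Real.log (1+x) := by linarith
    rcases le_or_gt 0 x with h | h
    · have : 0 ≤ x / (1 + x) := by positivity
      have : (0:ℝ) ≤ 2 * |x| := by positivity
      nlinarith [Real.log_nonneg (by linarith : (1:ℝ) ≤ 1 + x)]
    · have hax : |x| = -x := abs_of_neg h
      rw [hax]
      -- need -(2 * -x) = 2x ≤ log(1+x); have x/(1+x) ≤ log(1+x); x<0, 1+x ≥ 1/2
      have : 2 * x ≤ x / (1 + x) := by
        rw [le_div_iff₀ hpos]
        nlinarith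
      linarith
  · have h1 : Real.log (1 + x) ≤ x := by
      have := Real.log_le_sub_one_of_pos hpos; linarith
    calc Real.log (1+x) ≤ x := h1
    _ ≤ |x| := le_abs_self x
    _ ≤ 2 * |x| := by nlinarith [abs_nonneg x]

lemma summable_log_fac (hq0 : 0 < q) (hq1 : q < 1) (a : ℝ) (ha : ∀ j : ℕ, 0 < 1 - a * q ^ j) :
    Summable fun j : ℕ => Real.log (1 - a * q ^ j) := by
  apply Summable.of_norm_bounded_eventually_nat (g := fun j => 2 * (|a| * q ^ j))
  · exact (summable_geometric_of_lt_one hq0.le hq1).mul_left _ |>.mul_left _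
  · have h0 : Tendsto (fun j : ℕ => |a| * q ^ j) atTop (𝓝 0) := by
      simpa using (tendsto_pow_atTop_nhds_zero_of_lt_one hq0.le hq1).const_mul |a|
    filter_upwards [h0.eventually_le_const (by norm_num : (0:ℝ) < 1/2)] with j hj
    have : |-(a * q ^ j)| ≤ 1/2 := by
      rw [abs_neg, abs_mul, abs_of_nonneg (by positivity : (0:ℝ) ≤ q ^ j)]
      exact hj
    have := abs_log_one_add_le this
    simp only [Real.norm_eq_abs]
    calc |Real.log (1 - a * q ^ j)| = |Real.log (1 + -(a * q ^ j))| := by ring_nf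
    _ ≤ 2 * |-(a * q ^ j)| := this
    _ = 2 * (|a| * q ^ j) := by
        rw [abs_neg, abs_mul, abs_of_nonneg (by positivity : (0:ℝ) ≤ q ^ j)]

lemma hasProd_fac_pos (hq0 : 0 < q) (hq1 : q < 1) (a : ℝ) (ha : ∀ j : ℕ, 0 < 1 - a * q ^ j) :
    HasProd (fun j : ℕ => 1 - a * q ^ j) (qPochInf q a) := by
  have := (Real.hasProd_of_hasSum_log (f := fun j : ℕ => 1 - a * q ^ j)
    (fun j => ha j) (summable_log_fac hq0 hq1 a ha).hasSum).multipliable.hasProd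
  exact this

lemma qPochInf_pos (hq0 : 0 < q) (hq1 : q < 1) (a : ℝ) (ha : ∀ j : ℕ, 0 < 1 - a * q ^ j) :
    0 < qPochInf q a := by
  have this : rexp (∑' j : ℕ, Real.log (1 - a * q ^ j)) = ∏' j : ℕ, (1 - a * q ^ j) :=
    Real.rexp_tsum_eq_tprod (fun j => ha j) (summable_log_fac hq0 hq1 a ha)
  rw [qPochInf, ← this]
  exact Real.exp_pos _

lemma multipliable_fac (hq0 : 0 < q) (hq1 : q < 1) (a : ℝ) :
    Multipliable fun j : ℕ => 1 - a * q ^ j := by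
  obtain ⟨N, hN⟩ : ∃ N : ℕ, |a| * q ^ N < 1 := by
    have h0 : Tendsto (fun j : ℕ => |a| * q ^ j) atTop (𝓝 0) := by
      simpa using (tendsto_pow_atTop_nhds_zero_of_lt_one hq0.le hq1).const_mul |a|
    obtain ⟨N, hN⟩ := (h0.eventually_lt_const (by norm_num : (0:ℝ) < 1)).exists
    exact ⟨N, hN⟩
  have htail : Multipliable fun j : ℕ => 1 - a * q ^ (j + N) := by
    have hpos : ∀ j : ℕ, 0 < 1 - (a * q ^ N) * q ^ j := by
      intro j
      have : |a * q ^ N * q ^ j| < 1 := by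
        rw [abs_mul, abs_mul, abs_of_nonneg (by positivity : (0:ℝ) ≤ q ^ N),
          abs_of_nonneg (by positivity : (0:ℝ) ≤ q ^ j)]
        calc |a| * q ^ N * q ^ j ≤ |a| * q ^ N * 1 := by
              apply mul_le_mul_of_nonneg_left _ (by positivity)
              exact pow_le_one₀ hq0.le hq1.le
        _ < 1 := by simpa using hN
      cases abs_lt.mp this; linarith
    have := (hasProd_fac_pos hq0 hq1 (a * q ^ N) hpos).multipliable
    apply this.congr
    intro j
    rw [pow_add]; ring
  exact htail.comp_nat_add

lemma tendsto_qPoch (hq0 : 0 < q) (hq1 : q < 1) (a : ℝ) :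
    Tendsto (fun n => qPoch q a n) atTop (𝓝 (qPochInf q a)) :=
  (multipliable_fac hq0 hq1 a).hasProd.tendsto_prod_nat

lemma qPochInf_le_qPoch (hq0 : 0 < q) (hq1 : q < 1) (n : ℕ) :
    qPochInf q q ≤ qPoch q q n := by
  apply le_of_tendsto (tendsto_qPoch hq0 hq1 q)
  filter_upwards [eventually_ge_atTop n] with m hm
  exact qPoch_anti hq0 hq1 hm

lemma qPochInf_q_pos (hq0 : 0 < q) (hq1 : q < 1) : 0 < qPochInf q q := by
  apply qPochInf_pos hq0 hq1
  intro j
  have h3 : q * q ^ j ≤ q * 1 := by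
    apply mul_le_mul_of_nonneg_left _ hq0.le
    exact pow_le_one₀ hq0.le hq1.le
  nlinarith

/-- infinite product with a zero factor is zero -/
lemma qPochInf_eq_zero (hq0 : 0 < q) (hq1 : q < 1) {a : ℝ} (j0 : ℕ) (h : a * q ^ j0 = 1) :
    qPochInf q a = 0 := by
  have h0 : HasProd (fun j : ℕ => 1 - a * q ^ j) 0 := by
    rw [HasProd]
    apply tendsto_nhds_of_eventually_eq
    filter_upwards [eventually_ge_atTop ({j0} : Finset ℕ)] with s hs
    apply Finset.prod_eq_zero (hs (Finset.mem_singleton_self j0))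
    rw [h]; ring
  exact h0.tprod_eq

end QAux
namespace QAux
open Filter Real Topology

variable {q : ℝ}

lemma tri_succ (k : ℕ) : (k+1) * k / 2 = k * (k-1) / 2 + k := by
  rcases Nat.eq_zero_or_pos k with rfl | hk
  · simp
  obtain ⟨k, rfl⟩ := Nat.exists_eq_add_of_le hk
  have h1 : (1 + k + 1) * (1 + k) = (1 + k) * (1 + k - 1) + (1 + k) * 2 := by
    have hs : 1 + k - 1 = k := by omega
    rw [hs]; ring
  rw [h1, Nat.add_mul_div_right _ _ (by norm_num : 0 < 2)]

lemma qBinom_self (hq0 : 0 < q) (hq1 : q < 1) (n : ℕ) : qBinom q n n = 1 := by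
  rw [qBinom, Nat.sub_self, qPoch_zero, mul_one, div_self (qPoch_ne hq0 hq1 n)]

lemma qBinom_zero' (hq0 : 0 < q) (hq1 : q < 1) (n : ℕ) : qBinom q n 0 = 1 := by
  rw [qBinom, Nat.sub_zero, qPoch_zero, one_mul, div_self (qPoch_ne hq0 hq1 n)]

lemma pascal1 (hq0 : 0 < q) (hq1 : q < 1) (m j : ℕ) :
    qBinom q (m+j+2) (m+1) = qBinom q (m+j+1) (m+1) + q^(j+1) * qBinom q (m+j+1) m := by
  have e1 : m+j+2 - (m+1) = j+1 := by omega
  have e2 : m+j+1 - (m+1) = j := by omega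
  have e3 : m+j+1 - m = j+1 := by omega
  rw [qBinom, qBinom, qBinom, e1, e2, e3]
  have p1 : qPoch q q (m+j+2) = qPoch q q (m+j+1) * (1 - q * q ^ (m+j+1)) := qPoch_succ q _
  have p2 : qPoch q q (m+1) = qPoch q q m * (1 - q * q ^ m) := qPoch_succ q _
  have p3 : qPoch q q (j+1) = qPoch q q j * (1 - q * q ^ j) := qPoch_succ q _
  rw [p1, p2, p3]
  have hm := qPoch_ne hq0 hq1 m
  have hj := qPoch_ne hq0 hq1 j
  have hmj := qPoch_ne hq0 hq1 (m+j+1)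
  have h1 : (1 - q * q ^ m) ≠ 0 := by
    have h3 : q * q ^ m ≤ q * 1 := by
      apply mul_le_mul_of_nonneg_left _ hq0.le
      exact pow_le_one₀ hq0.le hq1.le
    nlinarith
  have h2 : (1 - q * q ^ j) ≠ 0 := by
    have h3 : q * q ^ j ≤ q * 1 := by
      apply mul_le_mul_of_nonneg_left _ hq0.le
      exact pow_le_one₀ hq0.le hq1.le
    nlinarith
  field_simp
  ring_nf

end QAux
namespace QAux
open Filter Real Topology
variable {q : ℝ}

lemma one_sub_qpow_ne (hq0 : 0 < q) (hq1 : q < 1) (m : ℕ) : (1 - q * q ^ m) ≠ 0 := by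
  have h3 : q * q ^ m ≤ q * 1 := by
    apply mul_le_mul_of_nonneg_left _ hq0.le
    exact pow_le_one₀ hq0.le hq1.le
  nlinarith

lemma pascal2 (hq0 : 0 < q) (hq1 : q < 1) (m j : ℕ) :
    qBinom q (m+j+2) (m+1) = q^(m+1) * qBinom q (m+j+1) (m+1) + qBinom q (m+j+1) m := by
  have e1 : m+j+2 - (m+1) = j+1 := by omega
  have e2 : m+j+1 - (m+1) = j := by omega
  have e3 : m+j+1 - m = j+1 := by omega
  rw [qBinom, qBinom, qBinom, e1, e2, e3]
  rw [qPoch_succ q (m+j+1), qPoch_succ q m, qPoch_succ q j]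
  have hm := qPoch_ne hq0 hq1 m
  have hj := qPoch_ne hq0 hq1 j
  have hmj := qPoch_ne hq0 hq1 (m+j+1)
  have h1 := one_sub_qpow_ne hq0 hq1 m
  have h2 := one_sub_qpow_ne hq0 hq1 j
  field_simp
  ring_nf

/-- the coefficient in the iterated q-derivative of a delta -/
def Ccoef (q : ℝ) (m k : ℕ) : ℝ :=
  (-1)^m * q^(k*(k-1)/2) * qBinom q (m+k) m / q^((m+k)*((m+k)-1)/2)

lemma Ccoef_zero (hq0 : 0 < q) (hq1 : q < 1) (k : ℕ) : Ccoef q 0 k = 1 := by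
  rw [Ccoef, qBinom_zero' hq0 hq1]
  simp [div_self (pow_ne_zero _ hq0.ne')]

lemma Ccoef_m_zero (hq0 : 0 < q) (hq1 : q < 1) (m : ℕ) :
    Ccoef q (m+1) 0 = -Ccoef q m 0 / q^m := by
  rw [Ccoef, Ccoef]
  simp only [add_zero, qBinom_self hq0 hq1]
  have e1 : (m+1) * ((m+1) - 1) / 2 = m * (m-1)/2 + m := by
    simpa using tri_succ m
  simp only [e1, pow_add, pow_succ]
  have := pow_ne_zero (m*(m-1)/2) hq0.ne'
  have := pow_ne_zero m hq0.ne'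
  field_simp
  try ring

lemma Ccoef_rec (hq0 : 0 < q) (hq1 : q < 1) (m k : ℕ) :
    Ccoef q (m+1) (k+1) = Ccoef q (m+1) k - Ccoef q m (k+1) / q^(m+1+k) := by
  have hp := pascal2 hq0 hq1 m k
  rw [Ccoef, Ccoef, Ccoef]
  have e0 : m+1+(k+1) = m+k+2 := by ring
  have e1 : m+(k+1) = m+k+1 := by ring
  have e2 : m+1+k = m+k+1 := by ring
  rw [e0, e1, e2, hp]
  have t1 : (k+1)*((k+1)-1)/2 = k*(k-1)/2 + k := by simpa using tri_succ k
  have t2 : (m+k+2)*((m+k+2)-1)/2 = (m+k+1)*((m+k+1)-1)/2 + (m+k+1) := by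
    have := tri_succ (m+k+1)
    simpa using this
  rw [t1, t2]
  have h1 := pow_ne_zero (k*(k-1)/2) hq0.ne'
  have h2 := pow_ne_zero ((m+k+1)*((m+k+1)-1)/2) hq0.ne'
  have h3 := pow_ne_zero (m+k+1) hq0.ne'
  rw [pow_add, pow_add]
  field_simp
  ring

end QAux
namespace QAux
open Filter Real Topology
variable {q : ℝ}

/-- coefficients of the finite q-binomial theorem -/
def qbc (q : ℝ) (n k : ℕ) : ℝ := (-1)^k * q^(k*(k-1)/2) * qBinom q n k

lemma qbc_zero (hq0 : 0 < q) (hq1 : q < 1) (n : ℕ) : qbc q n 0 = 1 := by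
  simp [qbc, qBinom_zero' hq0 hq1]

lemma qbc_top (hq0 : 0 < q) (hq1 : q < 1) (n : ℕ) :
    qbc q (n+1) (n+1) = -(q^n * qbc q n n) := by
  rw [qbc, qbc, qBinom_self hq0 hq1, qBinom_self hq0 hq1]
  have t : (n+1)*((n+1)-1)/2 = n*(n-1)/2 + n := by simpa using tri_succ n
  rw [t, pow_add, pow_succ]
  ring

lemma qbc_pascal (hq0 : 0 < q) (hq1 : q < 1) {n k : ℕ} (hk : k < n) :
    qbc q (n+1) (k+1) = qbc q n (k+1) - q^n * qbc q n k := by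
  obtain ⟨j, rfl⟩ : ∃ j, n = k + j + 1 := ⟨n - k - 1, by omega⟩
  have hp := pascal1 hq0 hq1 k j
  rw [qbc, qbc, qbc]
  have e0 : k + j + 1 + 1 = k + j + 2 := by ring
  rw [e0, hp]
  have t : (k+1)*((k+1)-1)/2 = k*(k-1)/2 + k := by simpa using tri_succ k
  rw [t, pow_add, pow_succ]
  ring

/-- the finite q-binomial theorem -/
lemma qbt (hq0 : 0 < q) (hq1 : q < 1) (w : ℝ) (n : ℕ) :
    qPoch q w n = ∑ k ∈ Finset.range (n+1), qbc q n k * w^k := by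
  induction n with
  | zero => simp [qPoch_zero, qbc_zero hq0 hq1]
  | succ n ih =>
    rw [qPoch_succ, ih, Finset.sum_range_succ' (fun k => qbc q (n+1) k * w^k) (n+1)]
    have lhs : (∑ k ∈ Finset.range (n+1), qbc q n k * w^k) * (1 - w * q^n)
        = (∑ k ∈ Finset.range (n+1), qbc q n k * w^k)
          - ∑ k ∈ Finset.range (n+1), (q^n * qbc q n k) * w^(k+1) := by
      rw [mul_sub, mul_one, Finset.sum_mul]
      congr 1
      apply Finset.sum_congr rfl
      intros; ring
    rw [lhs, Finset.sum_range_succ' (fun k => qbc q n k * w^k) n]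
    have key : ∑ k ∈ Finset.range (n+1), qbc q (n+1) (k+1) * w^(k+1)
        = (∑ k ∈ Finset.range n, qbc q n (k+1) * w^(k+1))
          - ∑ k ∈ Finset.range (n+1), (q^n * qbc q n k) * w^(k+1) := by
      rw [Finset.sum_range_succ (fun k => qbc q (n+1) (k+1) * w^(k+1)) n,
        Finset.sum_range_succ (fun k => (q^n * qbc q n k) * w^(k+1)) n]
      have hcong : ∀ k ∈ Finset.range n,
          qbc q (n+1) (k+1) * w^(k+1)
            = qbc q n (k+1) * w^(k+1) - (q^n * qbc q n k) * w^(k+1) := by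
        intro k hk
        rw [qbc_pascal hq0 hq1 (Finset.mem_range.mp hk)]
        ring
      rw [Finset.sum_congr rfl hcong, Finset.sum_sub_distrib,
        qbc_top hq0 hq1 n]
      ring
    rw [key, qbc_zero hq0 hq1, qbc_zero hq0 hq1]
    ring

/-- Euler's identity -/
lemma euler (hq0 : 0 < q) (hq1 : q < 1) (w : ℝ) :
    ∑' k : ℕ, (-1)^k * q^(k*(k-1)/2) * w^k / qPoch q q k = qPochInf q w := by
  set c : ℝ := qPochInf q q with hc
  have hcpos : 0 < c := qPochInf_q_pos hq0 hq1
  set g : ℕ → ℕ → ℝ := fun n k => if k ≤ n then qbc q n k * w^k else 0 with hg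
  set u : ℕ → ℝ := fun k => (-1)^k * q^(k*(k-1)/2) * w^k / qPoch q q k with hu
  set bound : ℕ → ℝ := fun k => q^(k*(k-1)/2) * (|w|+1)^k / c with hbound
  have hboundpos : ∀ k, 0 < bound k := by
    intro k; apply div_pos (by positivity) hcpos
  have hbound_sum : Summable bound := by
    apply summable_of_ratio_test_tendsto_lt_one (l := 0) one_pos
    · filter_upwards with k; exact (hboundpos k).ne'
    · have heq : ∀ k : ℕ, ‖bound (k+1)‖ / ‖bound k‖ = q^k * (|w|+1) := by
        intro k
        rw [Real.norm_eq_abs, Real.norm_eq_abs, abs_of_pos (hboundpos _),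
          abs_of_pos (hboundpos _), hbound]
        simp only
        rw [show (k+1)*((k+1)-1)/2 = k*(k-1)/2 + k by simpa using tri_succ k]
        rw [pow_add, pow_succ]
        have h1 : (0:ℝ) < q ^ (k*(k-1)/2) := by positivity
        have h2 : (0:ℝ) < (|w|+1) ^ k := by positivity
        field_simp
      simp only [heq]
      have : Tendsto (fun k : ℕ => q^k * (|w|+1)) atTop (𝓝 (0 * (|w|+1))) :=
        (tendsto_pow_atTop_nhds_zero_of_lt_one hq0.le hq1).mul_const _
      simpa using this
  have hqb_bound : ∀ {n k : ℕ}, k ≤ n → |qBinom q n k| ≤ 1 / c := by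
    intro n k hk
    have h1 : qBinom q n k = qPoch q q n / (qPoch q q k * qPoch q q (n-k)) := rfl
    have hkpos := qPoch_pos hq0 hq1 k
    have hnkpos := qPoch_pos hq0 hq1 (n-k)
    have hnpos := qPoch_pos hq0 hq1 n
    rw [h1, abs_of_pos (by positivity)]
    rw [div_le_div_iff₀ (by positivity) hcpos]
    have h2 : qPoch q q n ≤ qPoch q q (n-k) := qPoch_anti hq0 hq1 (Nat.sub_le n k)
    have h3 : c ≤ qPoch q q k := qPochInf_le_qPoch hq0 hq1 k
    nlinarith
  have hdom : ∀ (n : ℕ), ∀ k, ‖g n k‖ ≤ bound k := by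
    intro n k
    rw [hg]; simp only
    split_ifs with h
    · rw [Real.norm_eq_abs, qbc, abs_mul, abs_mul, abs_mul, abs_pow, abs_pow,
        abs_neg, abs_one, one_pow, one_mul, abs_of_pos hq0, abs_pow]
      have h1 : |w|^k ≤ (|w|+1)^k := by
        apply pow_le_pow_left₀ (abs_nonneg w); linarith
      have h2 := hqb_bound h
      have h3 : (0:ℝ) ≤ q^(k*(k-1)/2) := by positivity
      calc q^(k*(k-1)/2) * |qBinom q n k| * |w|^k
          ≤ q^(k*(k-1)/2) * (1/c) * (|w|+1)^k := by
            apply mul_le_mul _ h1 (by positivity) (by positivity)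
            apply mul_le_mul_of_nonneg_left h2 h3
      _ = bound k := by rw [hbound]; ring
    · simp only [norm_zero]
      exact (hboundpos k).le
  have hpt : ∀ k, Tendsto (fun n => g n k) atTop (𝓝 (u k)) := by
    intro k
    have hLn : Tendsto (fun n => qPoch q q n) atTop (𝓝 c) := tendsto_qPoch hq0 hq1 q
    have hLnk : Tendsto (fun n => qPoch q q (n - k)) atTop (𝓝 c) :=
      hLn.comp (tendsto_sub_atTop_nat k)
    have h2 : Tendsto (fun n => (-1:ℝ)^k * q^(k*(k-1)/2) * w^k *
        (qPoch q q n / (qPoch q q k * qPoch q q (n-k)))) atTop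
        (𝓝 ((-1:ℝ)^k * q^(k*(k-1)/2) * w^k * (c / (qPoch q q k * c)))) := by
      apply Tendsto.const_mul
      exact hLn.div (tendsto_const_nhds.mul hLnk) (by
        have := qPoch_pos hq0 hq1 k; positivity)
    have h3 : (-1:ℝ)^k * q^(k*(k-1)/2) * w^k * (c / (qPoch q q k * c)) = u k := by
      rw [hu]; simp only
      have hk := (qPoch_pos hq0 hq1 k).ne'
      field_simp
    rw [← h3]
    apply h2.congr'
    filter_upwards [eventually_ge_atTop k] with n hn
    rw [hg]; simp only [if_pos hn]
    rw [qbc, qBinom]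
    have hk := (qPoch_pos hq0 hq1 k).ne'
    have hnk := (qPoch_pos hq0 hq1 (n-k)).ne'
    field_simp
  have h1 : ∀ n, qPoch q w n = ∑' k, g n k := by
    intro n
    rw [tsum_eq_sum (s := Finset.range (n+1)) (by
      intro k hk
      rw [hg]; simp only
      rw [if_neg (by simp at hk; omega)])]
    rw [qbt hq0 hq1 w n]
    apply Finset.sum_congr rfl
    intro k hk
    rw [hg]; simp only [if_pos (by simp at hk; omega : k ≤ n)]
  have hconv : Tendsto (fun n => ∑' k, g n k) atTop (𝓝 (∑' k, u k)) :=
    tendsto_tsum_of_dominated_convergence hbound_sum hpt (Filter.Eventually.of_forall hdom)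
  have hconv2 : Tendsto (fun n => qPoch q w n) atTop (𝓝 (∑' k, u k)) := by
    apply hconv.congr
    intro n; exact (h1 n).symm
  exact tendsto_nhds_unique hconv2 (tendsto_qPoch hq0 hq1 w)

end QAux
namespace QAux
open Filter Real Topology
variable {q γ : ℝ}

lemma lat_eq_iff (hq0 : 0 < q) (hq1 : q < 1) (hγ : 0 < γ) {a b : ℝ}
    (ha : a = 1 ∨ a = -1) (hb : b = 1 ∨ b = -1) (k s : ℤ) :
    a * γ * q ^ k = b * γ * q ^ s ↔ (a = b ∧ k = s) := by
  have hk : (0:ℝ) < q ^ k := zpow_pos hq0 k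
  have hs : (0:ℝ) < q ^ s := zpow_pos hq0 s
  have hinj : Function.Injective fun n : ℤ => q ^ n :=
    zpow_right_injective₀ hq0 hq1.ne
  constructor
  · intro h
    rcases ha with rfl | rfl <;> rcases hb with rfl | rfl
    · refine ⟨rfl, hinj ?_⟩
      field_simp at h
      simpa using h
    · exfalso; nlinarith
    · exfalso; nlinarith
    · refine ⟨rfl, hinj ?_⟩
      have h' : γ * q ^ k = γ * q ^ s := by nlinarith
      field_simp at h'
      simpa using h'
  · rintro ⟨rfl, rfl⟩; rfl

lemma qdelta_lat (hq0 : 0 < q) (hq1 : q < 1) (hγ : 0 < γ) {θ η : ℝ}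
    (hθ : θ = 1 ∨ θ = -1) (hη : η = 1 ∨ η = -1) (l s : ℤ) :
    qdelta q γ η s (θ * γ * q ^ l) = if θ = η ∧ l = s then 1 else 0 := by
  rw [qdelta]
  simp only [lat_eq_iff hq0 hq1 hγ hθ hη]

lemma qMoment_delta (hq0 : 0 < q) (hq1 : q < 1) (hγ : 0 < γ) {ε : ℝ}
    (hε : ε = 1 ∨ ε = -1) (t : ℤ) (e : ℕ) :
    qMoment q γ e (qdelta q γ ε t) =
      q ^ (e*(e+1)/2) * ((1-q) * ((γ * q ^ t) * (ε * γ * q ^ t)^e)) := by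
  rw [qMoment, qInt]
  congr 2
  have key : ∑' k : ℤ, (q ^ k * γ) *
      ((qdelta q γ ε t (q ^ k * γ) * (q ^ k * γ)^e) +
        (qdelta q γ ε t (-(q ^ k * γ)) * (-(q ^ k * γ))^e)) =
      (γ * q ^ t) * (ε * γ * q ^ t)^e := by
    rw [tsum_eq_single t]
    · have e1 : (q ^ t * γ : ℝ) = 1 * γ * q ^ t := by ring
      have e2 : (-(1 * γ * q ^ t) : ℝ) = -1 * γ * q ^ t := by ring
      rw [e1, e2, qdelta_lat hq0 hq1 hγ (Or.inl rfl) hε,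
        qdelta_lat hq0 hq1 hγ (Or.inr rfl) hε]
      rcases hε with rfl | rfl
      · rw [if_pos ⟨rfl, rfl⟩, if_neg (by rintro ⟨h, -⟩; norm_num at h)]
        ring
      · rw [if_neg (by rintro ⟨h, -⟩; norm_num at h), if_pos ⟨rfl, rfl⟩]
        ring
    · intro k hk
      have e1 : (q ^ k * γ : ℝ) = 1 * γ * q ^ k := by ring
      have e2 : (-(1 * γ * q ^ k) : ℝ) = -1 * γ * q ^ k := by ring
      rw [e1, e2, qdelta_lat hq0 hq1 hγ (Or.inl rfl) hε,
        qdelta_lat hq0 hq1 hγ (Or.inr rfl) hε,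
        if_neg (by rintro ⟨-, h⟩; exact hk h), if_neg (by rintro ⟨-, h⟩; exact hk h)]
      ring
  exact key

lemma qDeriv_iter_delta (hq0 : 0 < q) (hq1 : q < 1) (hγ : 0 < γ) {η : ℝ}
    (hη : η = 1 ∨ η = -1) (s : ℤ) :
    ∀ (e : ℕ) (θ : ℝ) (l : ℤ), (θ = 1 ∨ θ = -1) →
    (qDeriv q)^[e] (qdelta q γ η s) (θ * γ * q ^ l) =
      if θ = η ∧ l ≤ s ∧ (s - l).toNat ≤ e then
        Ccoef q (s - l).toNat (e - (s - l).toNat) / ((1-q) * (θ * γ * q ^ l))^e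
      else 0 := by
  intro e
  induction e with
  | zero =>
    intro θ l hθ
    rw [Function.iterate_zero_apply, qdelta_lat hq0 hq1 hγ hθ hη]
    by_cases h : θ = η ∧ l = s
    · rw [if_pos h, if_pos ⟨h.1, by omega, by omega⟩]
      have : (s - l).toNat = 0 := by omega
      rw [this, Ccoef_zero hq0 hq1]
      simp
    · rw [if_neg h, if_neg (by
        rintro ⟨h1, h2, h3⟩
        exact h ⟨h1, by omega⟩)]
  | succ e ih =>
    intro θ l hθ
    rw [Function.iterate_succ_apply', qDeriv]
    have hx : q * (θ * γ * q ^ l) = θ * γ * q ^ (l+1) := by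
      rw [zpow_add_one₀ hq0.ne']; ring
    rw [hx, ih θ l hθ, ih θ (l+1) hθ]
    set W : ℝ := (1-q) * (θ * γ * q ^ l) with hW
    have hql : (0:ℝ) < q ^ l := zpow_pos hq0 l
    have hθ0 : θ ≠ 0 := by rcases hθ with rfl | rfl <;> norm_num
    have hWne : W ≠ 0 := by
      rw [hW]
      apply mul_ne_zero (by nlinarith)
      apply mul_ne_zero (mul_ne_zero hθ0 hγ.ne') hql.ne'
    have hD2 : (1-q) * (θ * γ * q ^ (l+1)) = q * W := by
      rw [hW, ← hx]; ring
    rw [hD2]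
    clear_value W
    have hqe : (q:ℝ)^e ≠ 0 := pow_ne_zero _ hq0.ne'
    have halg : ∀ A B : ℝ, (A / W^e - B / (q*W)^e) / W = (A - B / q^e) / W^(e+1) := by
      intro A B
      rw [mul_pow, pow_succ]
      field_simp
    have halg0 : ∀ B : ℝ, ((0:ℝ) - B / (q*W)^e) / W = -B / q^e / W^(e+1) := by
      intro B
      rw [mul_pow, pow_succ]
      field_simp
      try exact Or.inl (by ring)
      ring
    by_cases hθη : θ = η
    · by_cases hls : l ≤ s
      · rcases eq_or_lt_of_le hls with rfl | hlt
        · -- l = s, m = 0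
          have h1 : (l - l).toNat = 0 := by omega
          rw [if_pos ⟨hθη, le_refl l, by omega⟩]
          rw [if_neg (by rintro ⟨-, h, -⟩; omega)]
          rw [if_pos ⟨hθη, le_refl l, by omega⟩]
          rw [h1, Ccoef_zero hq0 hq1, Ccoef_zero hq0 hq1, pow_succ]
          field_simp
          simp
        · -- l < s
          set m : ℕ := (s - l).toNat with hmdef
          have hm1 : 1 ≤ m := by omega
          have hm' : (s - (l+1)).toNat = m - 1 := by omega
          rcases Nat.lt_or_ge e.succ m with hme | hme
          · -- m > e + 1 : everything vanishes
            rw [if_neg (by rintro ⟨-, -, h⟩; omega),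
              if_neg (by rintro ⟨-, -, h⟩; rw [hm'] at h; omega),
              if_neg (by rintro ⟨-, -, h⟩; omega)]
            simp
          · rcases eq_or_lt_of_le hme with hme' | hme'
            · -- m = e + 1
              rw [if_neg (by rintro ⟨-, -, h⟩; omega)]
              rw [if_pos ⟨hθη, by omega, by rw [hm']; omega⟩]
              rw [if_pos ⟨hθη, hls, by omega⟩]
              rw [hm']
              have he1 : m - 1 = e := by omega
              have he2 : e - (m - 1) = 0 := by omega
              have he3 : e + 1 - m = 0 := by omega
              have he4 : m = e + 1 := by omega
              rw [he2, he3, he1, he4, Ccoef_m_zero hq0 hq1 e]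
              exact halg0 _
            · -- m ≤ e
              have hmle : m ≤ e := by omega
              rw [if_pos ⟨hθη, hls, hmle⟩,
                if_pos ⟨hθη, by omega, by rw [hm']; omega⟩,
                if_pos ⟨hθη, hls, by omega⟩]
              rw [hm']
              have he1 : m - 1 + 1 = m := by omega
              set k : ℕ := e - m with hkdef
              have he2 : e - (m - 1) = k + 1 := by omega
              have he3 : e + 1 - m = k + 1 := by omega
              rw [he2, he3]
              have hrec := Ccoef_rec hq0 hq1 (m-1) k
              rw [he1] at hrec
              have hek : m + k = e := by omega
              rw [hek] at hrec
              rw [hrec]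
              exact halg _ _
      · -- s < l : all zero
        rw [if_neg (by rintro ⟨-, h, -⟩; omega),
          if_neg (by rintro ⟨-, h, -⟩; omega),
          if_neg (by rintro ⟨-, h, -⟩; omega)]
        simp
    · rw [if_neg (by rintro ⟨h, -⟩; exact hθη h),
        if_neg (by rintro ⟨h, -⟩; exact hθη h),
        if_neg (by rintro ⟨h, -⟩; exact hθη h)]
      simp

end QAux
namespace QAux
open Filter Real Topology
variable {q γ : ℝ}

lemma qConv_delta_vanish_sign (hq0 : 0 < q) (hq1 : q < 1) (hγ : 0 < γ) {ε η θ : ℝ}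
    (hη : η = 1 ∨ η = -1) (hθ : θ = 1 ∨ θ = -1) (hθη : θ ≠ η) (s t l : ℤ) :
    qConv q γ (qdelta q γ ε t) (qdelta q γ η s) (θ * γ * q ^ l) = 0 := by
  simp only [qConv]
  rw [tsum_eq_single 0 ?_]
  · rw [qDeriv_iter_delta hq0 hq1 hγ hη s 0 θ l hθ,
      if_neg (by rintro ⟨h, -⟩; exact hθη h)]
    ring
  · intro e _
    rw [qDeriv_iter_delta hq0 hq1 hγ hη s e θ l hθ,
      if_neg (by rintro ⟨h, -⟩; exact hθη h)]
    ring

lemma qConv_delta_vanish (hq0 : 0 < q) (hq1 : q < 1) (hγ : 0 < γ) {ε η θ : ℝ}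
    (hη : η = 1 ∨ η = -1) (hθ : θ = 1 ∨ θ = -1) (s t l : ℤ) (hsl : s < l) :
    qConv q γ (qdelta q γ ε t) (qdelta q γ η s) (θ * γ * q ^ l) = 0 := by
  simp only [qConv]
  rw [tsum_eq_single 0 ?_]
  · rw [qDeriv_iter_delta hq0 hq1 hγ hη s 0 θ l hθ,
      if_neg (by rintro ⟨-, h, -⟩; omega)]
    ring
  · intro e _
    rw [qDeriv_iter_delta hq0 hq1 hγ hη s e θ l hθ,
      if_neg (by rintro ⟨-, h, -⟩; omega)]
    ring

lemma qConv_delta_eq (hq0 : 0 < q) (hq1 : q < 1) (hγ : 0 < γ) {ε η θ : ℝ}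
    (hε : ε = 1 ∨ ε = -1) (hη : η = 1 ∨ η = -1) (hθ : θ = 1 ∨ θ = -1)
    (s t l : ℤ) (hls : l ≤ s) :
    qConv q γ (qdelta q γ ε t) (qdelta q γ η s) (θ * γ * q ^ l) =
      (if θ = η then 1 else 0) * γ * (1 - q) *
        q ^ ((t + s - l) + (s - l) * (t - l) : ℤ) * (η * ε) ^ (s - l).toNat *
        qPochInf q (η * ε * q ^ (t - l + 1 : ℤ)) / qPoch q q (s - l).toNat := by
  by_cases hθη : θ = η
  case neg =>
    rw [qConv_delta_vanish_sign hq0 hq1 hγ hη hθ hθη s t l, if_neg hθη]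
    ring
  rw [if_pos hθη]
  set m : ℕ := (s - l).toNat with hmdef
  set w : ℝ := η * ε * q ^ (t - l + 1 : ℤ) with hwdef
  -- zpow facts
  have hq0' := hq0.ne'
  have hzz : q ^ (t - l + 1 : ℤ) * q ^ (l : ℤ) = q * q ^ (t : ℤ) := by
    rw [← zpow_add₀ hq0', show (t - l + 1 + l : ℤ) = t + 1 by ring, zpow_add_one₀ hq0']
    ring
  have hmz : (m : ℤ) = s - l := Int.toNat_of_nonneg (by omega)
  have hz1 : q ^ ((t + s - l) + (s - l) * (t - l) : ℤ) =
      q ^ (t : ℤ) * (q ^ (t - l + 1 : ℤ)) ^ m := by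
    rw [← zpow_natCast (q ^ (t - l + 1 : ℤ)) m, ← zpow_mul, ← zpow_add₀ hq0']
    congr 1
    rw [hmz]; ring
  have hθ0 : θ ≠ 0 := by rcases hθ with rfl | rfl <;> norm_num
  have h1q : (1 - q) ≠ 0 := by nlinarith
  have hql : (0:ℝ) < q ^ (l:ℤ) := zpow_pos hq0 l
  have hqt : (0:ℝ) < q ^ (t:ℤ) := zpow_pos hq0 t
  -- base identity
  have hND : (1-q) * (q * (ε * γ * q ^ (t:ℤ))) = w * ((1-q) * (θ * γ * q ^ (l:ℤ))) := by
    rw [hwdef, hθη]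
    rcases hε with rfl | rfl <;> rcases hη with rfl | rfl
    · linear_combination -((1-q) * γ * hzz)
    · linear_combination -((1-q) * γ * hzz)
    · linear_combination (1-q) * γ * hzz
    · linear_combination (1-q) * γ * hzz
  -- the term computation
  have key : ∀ k : ℕ,
      (-1)^(m+k) * qMoment q γ (m+k) (qdelta q γ ε t) / qFact q (m+k) *
        ((qDeriv q)^[m+k] (qdelta q γ η s) (θ * γ * q ^ l)) =
      (γ * (1-q) * q ^ ((t + s - l) + (s - l) * (t - l) : ℤ) * (η*ε)^m / qPoch q q m) *
        ((-1)^k * q^(k*(k-1)/2) * w^k / qPoch q q k) := by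
    intro k
    rw [qDeriv_iter_delta hq0 hq1 hγ hη s (m+k) θ l hθ,
      if_pos ⟨hθη, hls, by omega⟩,
      qMoment_delta hq0 hq1 hγ hε t (m+k), qFact]
    have hnat : (m+k) - m = k := by omega
    rw [hnat, Ccoef, qBinom, hnat]
    have htri : (m+k) * ((m+k)+1) / 2 = (m+k) * ((m+k)-1) / 2 + (m+k) := by
      rw [Nat.mul_comm]
      exact tri_succ (m+k)
    rw [htri, pow_add]
    -- abbreviations
    set D : ℝ := (1-q) * (θ * γ * q ^ (l:ℤ)) with hD
    set A : ℝ := q ^ ((m+k) * ((m+k)-1) / 2) with hA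
    set Tk : ℝ := q ^ (k*(k-1)/2) with hTk
    have hPm := qPoch_ne hq0 hq1 m
    have hPk := qPoch_ne hq0 hq1 k
    have hPmk := qPoch_ne hq0 hq1 (m+k)
    have hAne : A ≠ 0 := pow_ne_zero _ hq0'
    have hDne : D ≠ 0 := mul_ne_zero h1q (mul_ne_zero (mul_ne_zero hθ0 hγ.ne') hql.ne')
    have hbase : (ε * γ * q ^ (t:ℤ) : ℝ) = w * D / (q * (1-q)) := by
      rw [eq_div_iff (mul_ne_zero hq0' h1q)]
      linear_combination hND
    rw [hbase]
    trans (γ * (1-q) * q^(t:ℤ) * w^m / qPoch q q m * ((-1:ℝ)^k * Tk * w^k / qPoch q q k))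
    · clear_value D A Tk w
      generalize hu : (1 - q : ℝ) = u
      have hune : u ≠ 0 := hu ▸ h1q
      rw [← hmdef]
      field_simp
      ring_nf
      simp only [pow_mul', neg_one_sq, one_pow, mul_one, inv_pow]
      field_simp
      try ring_nf
      try rw [hA]
      try rw [show (m*(m+k-1) + k*(m+k-1))/2 = (m+k)*((m+k)-1)/2 by
        rw [← Nat.add_mul]]
      try ring
    · rw [hz1, hwdef]
      ring
  -- assemble the sum
  simp only [qConv]
  rw [← Function.Injective.tsum_eq (f := fun e => (-1)^e * qMoment q γ e (qdelta q γ ε t) /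
        qFact q e * ((qDeriv q)^[e] (qdelta q γ η s) (θ * γ * q ^ l)))
      (add_right_injective m) ?_]
  · simp only [key]
    rw [tsum_mul_left, euler hq0 hq1 w]
    ring
  · intro e he
    rcases le_or_gt m e with h | h
    · exact ⟨e - m, Nat.add_sub_cancel' h⟩
    · exfalso
      apply he
      show (-1) ^ e * qMoment q γ e (qdelta q γ ε t) / qFact q e *
        (qDeriv q)^[e] (qdelta q γ η s) (θ * γ * q ^ l) = 0
      rw [qDeriv_iter_delta hq0 hq1 hγ hη s e θ l hθ,
        if_neg (by rintro ⟨-, -, h3⟩; omega)]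
      ring

end QAux
namespace QAux
open Filter Real Topology
variable {q γ : ℝ}

lemma sq_one {ε : ℝ} (hε : ε = 1 ∨ ε = -1) : ε * ε = 1 := by
  rcases hε with rfl | rfl <;> norm_num

lemma pochInf_zero_arg (hq0 : 0 < q) (hq1 : q < 1) {ε : ℝ} (hε : ε = 1 ∨ ε = -1)
    {t l : ℤ} (h : t < l) :
    qPochInf q (ε * ε * q ^ (t - l + 1 : ℤ)) = 0 := by
  apply qPochInf_eq_zero hq0 hq1 (l - 1 - t).toNat
  rw [sq_one hε, one_mul]
  have hc : ((l - 1 - t).toNat : ℤ) = l - 1 - t := Int.toNat_of_nonneg (by omega)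
  rw [← zpow_natCast q (l - 1 - t).toNat, hc, ← zpow_add₀ hq0.ne',
    show (t - l + 1 + (l - 1 - t) : ℤ) = 0 by ring, zpow_zero]

lemma pochInf_shift (hq0 : 0 < q) (hq1 : q < 1) (d : ℕ) :
    qPochInf q (q ^ (d + 1)) = qPochInf q q / qPoch q q d := by
  have htail : Multipliable (fun n : ℕ => 1 - q * q ^ (n + d)) := by
    apply (multipliable_fac hq0 hq1 (q ^ (d+1))).congr
    intro j
    congr 1
    ring
  have h := Multipliable.prod_mul_tprod_nat_mul' (f := fun j : ℕ => 1 - q * q ^ j) (k := d) htail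
  have h2 : qPochInf q (q ^ (d+1)) = ∏' i : ℕ, (1 - q * q ^ (i + d)) := by
    rw [qPochInf]
    apply tprod_congr
    intro j
    congr 1
    ring
  rw [h2, eq_div_iff (qPoch_ne hq0 hq1 d)]
  rw [mul_comm]
  exact h

lemma pochInf_shift' (hq0 : 0 < q) (hq1 : q < 1) {ε : ℝ} (hε : ε = 1 ∨ ε = -1)
    {t l : ℤ} (h : l ≤ t) :
    qPochInf q (ε * ε * q ^ (t - l + 1 : ℤ)) =
      qPochInf q q / qPoch q q (t - l).toNat := by
  rw [sq_one hε, one_mul]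
  have hc : (t - l + 1 : ℤ) = (((t - l).toNat + 1 : ℕ) : ℤ) := by omega
  rw [hc, zpow_natCast]
  exact pochInf_shift hq0 hq1 (t - l).toNat

/-- same-sign convolution vanishes when the evaluation point is above either support -/
lemma qConv_same_sign_zero (hq0 : 0 < q) (hq1 : q < 1) (hγ : 0 < γ) {ε θ : ℝ}
    (hε : ε = 1 ∨ ε = -1) (hθ : θ = 1 ∨ θ = -1) (s t l : ℤ) (h : s < l ∨ t < l) :
    qConv q γ (qdelta q γ ε t) (qdelta q γ ε s) (θ * γ * q ^ l) = 0 := by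
  rcases h with h | h
  · exact qConv_delta_vanish hq0 hq1 hγ hε hθ s t l h
  · rcases le_or_gt l s with hls | hls
    · rw [qConv_delta_eq hq0 hq1 hγ hε hε hθ s t l hls,
        pochInf_zero_arg hq0 hq1 hε h]
      ring
    · exact qConv_delta_vanish hq0 hq1 hγ hε hθ s t l hls

end QAux
/-- q-convolution of discrete delta functions. -/
theorem stmt3 (q γ : ℝ) (hq : q ∈ Set.Ioo (0 : ℝ) 1) (hγ : 0 < γ)
    (ε η θ : ℝ) (hε : ε = 1 ∨ ε = -1) (hη : η = 1 ∨ η = -1) (hθ : θ = 1 ∨ θ = -1)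
    (s t l : ℤ) :
    (l ≤ s →
      qConv q γ (qdelta q γ ε t) (qdelta q γ η s) (θ * γ * q ^ l) =
        (if θ = η then 1 else 0) * γ * (1 - q) *
          q ^ ((t + s - l) + (s - l) * (t - l) : ℤ) * (η * ε) ^ (s - l).toNat *
          qPochInf q (η * ε * q ^ (t - l + 1 : ℤ)) / qPoch q q (s - l).toNat) ∧
    (l ≤ s → t < l → η = ε →
      qConv q γ (qdelta q γ ε t) (qdelta q γ η s) (θ * γ * q ^ l) = 0) ∧
    (l ≤ s → l ≤ t → η = ε →
      qConv q γ (qdelta q γ ε t) (qdelta q γ η s) (θ * γ * q ^ l) =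
        (if θ = η then 1 else 0) * γ * (1 - q) * qPochInf q q *
          q ^ ((t + s - l) + (s - l) * (t - l) : ℤ) /
          (qPoch q q (s - l).toNat * qPoch q q (t - l).toNat)) ∧
    (η = ε → ∀ l' : ℤ, ∀ θ' : ℝ, (θ' = 1 ∨ θ' = -1) →
      qConv q γ (qdelta q γ ε t) (qdelta q γ η s) (θ' * γ * q ^ l') =
        qConv q γ (qdelta q γ η s) (qdelta q γ ε t) (θ' * γ * q ^ l')) := by
  obtain ⟨hq0, hq1⟩ := hq
  refine ⟨?_, ?_, ?_, ?_⟩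
  · intro hls
    exact QAux.qConv_delta_eq hq0 hq1 hγ hε hη hθ s t l hls
  · intro hls htl hηε
    subst hηε
    rw [QAux.qConv_delta_eq hq0 hq1 hγ hε hη hθ s t l hls,
      QAux.pochInf_zero_arg hq0 hq1 hη htl]
    ring
  · intro hls hlt hηε
    subst hηε
    rw [QAux.qConv_delta_eq hq0 hq1 hγ hε hη hθ s t l hls,
      QAux.pochInf_shift' hq0 hq1 hη hlt, QAux.sq_one hη, one_pow]
    have h1 := QAux.qPoch_ne hq0 hq1 (s-l).toNat
    have h2 := QAux.qPoch_ne hq0 hq1 (t-l).toNat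
    field_simp
  · intro hηε l' θ' hθ'
    subst hηε
    rcases le_or_gt l' s with hs | hs <;> rcases le_or_gt l' t with ht | ht
    · rw [QAux.qConv_delta_eq hq0 hq1 hγ hε hη hθ' s t l' hs,
        QAux.qConv_delta_eq hq0 hq1 hγ hη hε hθ' t s l' ht,
        QAux.pochInf_shift' hq0 hq1 hη ht, QAux.pochInf_shift' hq0 hq1 hη hs,
        QAux.sq_one hη, one_pow]
      have hz : ((t + s - l') + (s - l') * (t - l') : ℤ) =
          ((s + t - l') + (t - l') * (s - l')) := by ring
      rw [hz]
      have h1 := QAux.qPoch_ne hq0 hq1 (s-l').toNat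
      have h2 := QAux.qPoch_ne hq0 hq1 (t-l').toNat
      field_simp
      ring
    · rw [QAux.qConv_same_sign_zero hq0 hq1 hγ hη hθ' s t l' (Or.inr ht),
        QAux.qConv_same_sign_zero hq0 hq1 hγ hη hθ' t s l' (Or.inl ht)]
    · rw [QAux.qConv_same_sign_zero hq0 hq1 hγ hη hθ' s t l' (Or.inl hs),
        QAux.qConv_same_sign_zero hq0 hq1 hγ hη hθ' t s l' (Or.inr hs)]
    · rw [QAux.qConv_same_sign_zero hq0 hq1 hγ hη hθ' s t l' (Or.inl hs),
        QAux.qConv_same_sign_zero hq0 hq1 hγ hη hθ' t s l' (Or.inl ht)]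
end
end

section
/- For t - n ≤ s ≤ t and ε, η ∈ {±1}, the n-th q-derivative of a discrete delta function satisfies (∂^n δ_{ηγq^t})(εγq^s) = (-1)^{t-s} [ε=η] η^n γ^{-n} q^{-sn} (1-q)^{-n} [n choose t-s]_q q^{-(t-s)(t-s-1)/2 - (t-s)(n-t+s)}; in particular ∂^n δ_{ηγq^t} is a linear combination of the delta functions δ_{ηγq^s} for t-n ≤ s ≤ t. -/
/-!
Ryde's formula writes `((1 - q) x)ⁿ ∂ⁿf(x)` as `∑_{k ≤ n} c(n, k) f(qᵏ x)` with
`c(n, k) = (-1)ᵏ [n k]_q q^{-k(n-k) - k(k-1)/2}`; it follows by induction on `n`, the coefficients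
obeying `c(n+1, k+1) = c(n, k+1) - q⁻ⁿ c(n, k)` by the q-Pascal rule. For a delta function at
`ηγqᵗ` evaluated at `x = εγqˢ`, the points `qᵏ x = εγq^{s+k}` of the lattice are distinct, so only the
term with `ε = η` and `k = t - s` survives.
-/

open scoped BigOperators

noncomputable section

lemma Int.natCast_mul_sub_one_ediv_two (k : ℕ) : (k : ℤ) * (k - 1) / 2 = k.choose 2 := by
  have h : (k : ℤ) * (k - 1) = 2 * k.choose 2 := by
    have := Nat.cast_choose_two ℚ k
    qify
    linarith
  rw [h, Int.mul_ediv_cancel_left _ two_ne_zero]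

lemma qPoch_succ (q a : ℝ) (k : ℕ) : qPoch q a (k + 1) = qPoch q a k * (1 - a * q ^ k) :=
  Finset.prod_range_succ _ _

lemma qPoch_zero (q a : ℝ) : qPoch q a 0 = 1 :=
  Finset.prod_range_zero _

section QBinomial

variable {q : ℝ}

lemma one_sub_pow_ne_zero (hq0 : 0 ≤ q) (hq1 : q < 1) {k : ℕ} (hk : k ≠ 0) : 1 - q ^ k ≠ 0 :=
  sub_ne_zero.mpr (pow_lt_one₀ hq0 hq1 hk).ne'

lemma qPoch_self_ne_zero (hq0 : 0 ≤ q) (hq1 : q < 1) (k : ℕ) : qPoch q q k ≠ 0 :=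
  Finset.prod_ne_zero_iff.mpr fun j _ => by
    rw [← pow_succ']; exact one_sub_pow_ne_zero hq0 hq1 j.succ_ne_zero

lemma qBinom_zero_right (hq0 : 0 ≤ q) (hq1 : q < 1) (n : ℕ) : qBinom q n 0 = 1 := by
  rw [qBinom, Nat.sub_zero, qPoch_zero, one_mul,
    div_self (qPoch_self_ne_zero hq0 hq1 n)]

lemma qBinom_self (hq0 : 0 ≤ q) (hq1 : q < 1) (n : ℕ) : qBinom q n n = 1 := by
  rw [qBinom, Nat.sub_self, qPoch_zero, mul_one,
    div_self (qPoch_self_ne_zero hq0 hq1 n)]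

lemma qBinom_succ_succ (hq0 : 0 ≤ q) (hq1 : q < 1) {n k : ℕ} (hk : k < n) :
    qBinom q (n + 1) (k + 1) = q ^ (k + 1) * qBinom q n (k + 1) + qBinom q n k := by
  obtain ⟨m, rfl⟩ := Nat.exists_eq_add_of_lt hk
  have hsub₁ : k + m + 1 + 1 - (k + 1) = m + 1 := by omega
  have hsub₂ : k + m + 1 - (k + 1) = m := by omega
  have hsub₃ : k + m + 1 - k = m + 1 := by omega
  simp only [qBinom, hsub₁, hsub₂, hsub₃, qPoch_succ q q (k + m + 1), qPoch_succ q q k,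
    qPoch_succ q q m, ← pow_succ']
  have hPk := qPoch_self_ne_zero hq0 hq1 k
  have hPm := qPoch_self_ne_zero hq0 hq1 m
  have hk₁ := one_sub_pow_ne_zero hq0 hq1 k.succ_ne_zero
  have hm₁ := one_sub_pow_ne_zero hq0 hq1 m.succ_ne_zero
  field_simp
  ring

end QBinomial

def rydeCoeff (q : ℝ) (n k : ℕ) : ℝ := (-1) ^ k * qBinom q n k / q ^ (k * (n - k) + k.choose 2)

section Ryde

variable {q : ℝ}

lemma rydeCoeff_zero_right (hq0 : 0 ≤ q) (hq1 : q < 1) (n : ℕ) : rydeCoeff q n 0 = 1 := by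
  simp [rydeCoeff, qBinom_zero_right hq0 hq1]

lemma rydeCoeff_succ_self (hq0 : 0 ≤ q) (hq1 : q < 1) (n : ℕ) :
    rydeCoeff q (n + 1) (n + 1) = -rydeCoeff q n n / q ^ n := by
  simp only [rydeCoeff, qBinom_self hq0 hq1, Nat.sub_self, mul_zero, zero_add,
    Nat.choose_succ_succ', Nat.choose_one_right, pow_add]
  ring

lemma rydeCoeff_succ_succ (hq0 : 0 < q) (hq1 : q < 1) {n k : ℕ} (hk : k < n) :
    rydeCoeff q (n + 1) (k + 1) = rydeCoeff q n (k + 1) - rydeCoeff q n k / q ^ n := by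
  obtain ⟨m, rfl⟩ := Nat.exists_eq_add_of_lt hk
  have hsub₁ : k + m + 1 + 1 - (k + 1) = m + 1 := by omega
  have hsub₂ : k + m + 1 - (k + 1) = m := by omega
  have hsub₃ : k + m + 1 - k = m + 1 := by omega
  simp only [rydeCoeff, qBinom_succ_succ hq0.le hq1 hk, hsub₁, hsub₂, hsub₃,
    Nat.choose_succ_succ', Nat.choose_one_right]
  have hq := hq0.ne'
  field_simp
  ring

open Finset in
lemma sum_rydeCoeff_succ (hq0 : 0 < q) (hq1 : q < 1) (n : ℕ) (g : ℕ → ℝ) :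
    ∑ k ∈ range (n + 2), rydeCoeff q (n + 1) k * g k =
      ∑ k ∈ range (n + 1), rydeCoeff q n k * g k -
        (∑ k ∈ range (n + 1), rydeCoeff q n k * g (k + 1)) / q ^ n := by
  have hmiddle : ∑ k ∈ range n, rydeCoeff q (n + 1) (k + 1) * g (k + 1) =
      ∑ k ∈ range n, rydeCoeff q n (k + 1) * g (k + 1) -
        (∑ k ∈ range n, rydeCoeff q n k * g (k + 1)) / q ^ n := by
    rw [sum_div, ← sum_sub_distrib]
    refine sum_congr rfl fun k hk => ?_
    rw [rydeCoeff_succ_succ hq0 hq1 (mem_range.mp hk)]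
    ring
  rw [sum_range_succ', sum_range_succ, hmiddle, sum_range_succ' _ n, sum_range_succ _ n,
    rydeCoeff_succ_self hq0.le hq1, rydeCoeff_zero_right hq0.le hq1, rydeCoeff_zero_right hq0.le hq1]
  ring

/-- Ryde's formula. -/
theorem qDeriv_iterate_mul_pow (hq0 : 0 < q) (hq1 : q < 1) (f : ℝ → ℝ) (n : ℕ) {x : ℝ}
    (hx : x ≠ 0) :
    ((1 - q) * x) ^ n * (qDeriv q)^[n] f x =
      ∑ k ∈ Finset.range (n + 1), rydeCoeff q n k * f (q ^ k * x) := by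
  induction n generalizing x with
  | zero => simp [rydeCoeff_zero_right hq0.le hq1]
  | succ n ih =>
    have h1q : 1 - q ≠ 0 := sub_ne_zero.mpr hq1.ne'
    have hshift : ((1 - q) * x) ^ n * (qDeriv q)^[n] f (q * x) =
        (∑ k ∈ Finset.range (n + 1), rydeCoeff q n k * f (q ^ (k + 1) * x)) / q ^ n := by
      simp only [pow_succ, mul_assoc, ← ih (mul_ne_zero hq0.ne' hx), mul_pow]
      field_simp
    rw [sum_rydeCoeff_succ hq0 hq1, ← ih hx, ← hshift, Function.iterate_succ_apply', qDeriv]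
    field_simp
    ring

end Ryde

section QDelta

variable {q γ ε η : ℝ}

lemma sign_mul_zpow_eq_iff (hq0 : 0 < q) (hq1 : q ≠ 1) (hγ : γ ≠ 0)
    (hε : ε = 1 ∨ ε = -1) (hη : η = 1 ∨ η = -1) (s t : ℤ) :
    ε * γ * q ^ s = η * γ * q ^ t ↔ ε = η ∧ s = t := by
  refine ⟨fun h => ?_, fun ⟨hεη, hst⟩ => hεη ▸ hst ▸ rfl⟩
  have hs := zpow_pos hq0 s
  have ht := zpow_pos hq0 t
  have hεη : ε = η := by
    by_contra hne
    have hopp : ε = -η := by rcases hε with rfl | rfl <;> rcases hη with rfl | rfl <;> simp_all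
    have : η * γ * (q ^ s + q ^ t) = 0 := by rw [hopp] at h; linear_combination -h
    rcases hη with rfl | rfl <;> simp [hγ, (add_pos hs ht).ne'] at this
  subst hεη
  have hε0 : ε ≠ 0 := by rcases hε with rfl | rfl <;> norm_num
  exact ⟨rfl, zpow_right_injective₀ hq0 hq1 (mul_left_cancel₀ (mul_ne_zero hε0 hγ) h)⟩

lemma qDeriv_iterate_qdelta (hq0 : 0 < q) (hq1 : q < 1) (hγ : γ ≠ 0)
    (hε : ε = 1 ∨ ε = -1) (hη : η = 1 ∨ η = -1) (n : ℕ) (s t : ℤ) :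
    (qDeriv q)^[n] (qdelta q γ η t) (ε * γ * q ^ s) =
      if ε = η ∧ t - n ≤ s ∧ s ≤ t then
        rydeCoeff q n (t - s).toNat / ((1 - q) * (ε * γ * q ^ s)) ^ n
      else 0 := by
  have hx : ε * γ * q ^ s ≠ 0 := by
    have : ε ≠ 0 := by rcases hε with rfl | rfl <;> norm_num
    exact mul_ne_zero (mul_ne_zero this hγ) (zpow_ne_zero s hq0.ne')
  have hdelta (k : ℕ) : qdelta q γ η t (q ^ k * (ε * γ * q ^ s)) =
      if ε = η ∧ s + k = t then 1 else 0 := by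
    have hshift : q ^ k * (ε * γ * q ^ s) = ε * γ * q ^ (s + k) := by
      rw [zpow_add₀ hq0.ne', zpow_natCast]; ring
    simp only [qdelta, hshift, sign_mul_zpow_eq_iff hq0 hq1.ne hγ hε hη]
  have hpow : ((1 - q) * (ε * γ * q ^ s)) ^ n ≠ 0 :=
    pow_ne_zero n (mul_ne_zero (sub_ne_zero.mpr hq1.ne') hx)
  rw [eq_div_of_mul_eq hpow ((mul_comm _ _).trans (qDeriv_iterate_mul_pow hq0 hq1 _ n hx))]
  simp only [hdelta, mul_ite, mul_one, mul_zero]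
  split_ifs with h
  · rw [Finset.sum_eq_single_of_mem (t - s).toNat (Finset.mem_range.mpr (by omega)),
      if_pos ⟨h.1, by omega⟩]
    intro k _ hne
    exact if_neg fun h' => hne (by omega)
  · rw [Finset.sum_eq_zero, zero_div]
    intro k hk
    exact if_neg fun h' => h ⟨h'.1, by have := Finset.mem_range.mp hk; omega, by omega⟩

end QDelta

lemma rydeCoeff_toNat_div_pow {q η : ℝ} (hη : η = 1 ∨ η = -1) (γ : ℝ) {n : ℕ} {s t : ℤ}
    (hts : t - n ≤ s) (hst : s ≤ t) :
    rydeCoeff q n (t - s).toNat / ((1 - q) * (η * γ * q ^ s)) ^ n =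
      (-1 : ℝ) ^ (t - s) * η ^ n * γ ^ (-(n : ℤ)) * q ^ (-(s * n) : ℤ) * (1 - q) ^ (-(n : ℤ)) *
        qBinom q n (t - s).toNat *
        q ^ (-(((t - s) * (t - s - 1)) / 2 + (t - s) * ((n : ℤ) - t + s)) : ℤ) := by
  obtain ⟨k, rfl⟩ : ∃ k : ℕ, t = s + k := ⟨(t - s).toNat, by omega⟩
  have hkn : k ≤ n := by omega
  have hexp : ((k : ℤ) * (k - 1)) / 2 + k * ((n : ℤ) - (s + k) + s) =
      ((k * (n - k) + k.choose 2 : ℕ) : ℤ) := by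
    rw [Int.natCast_mul_sub_one_ediv_two]
    push_cast [Nat.cast_sub hkn]
    ring
  have hηinv : η⁻¹ = η := by rcases hη with rfl | rfl <;> norm_num
  simp only [add_sub_cancel_left, Int.toNat_natCast, hexp, rydeCoeff, zpow_neg, zpow_natCast,
    zpow_mul, mul_pow, div_eq_mul_inv, mul_inv, ← inv_pow, hηinv]
  ring

/-- Iterated q-derivatives of discrete delta functions. -/
theorem stmt4 (q γ : ℝ) (hq : q ∈ Set.Ioo (0 : ℝ) 1) (hγ : 0 < γ)
    (ε η : ℝ) (hε : ε = 1 ∨ ε = -1) (hη : η = 1 ∨ η = -1)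
    (n : ℕ) (t s : ℤ) :
    ((t : ℤ) - n ≤ s → s ≤ t →
      (qDeriv q)^[n] (qdelta q γ η t) (ε * γ * q ^ s) =
        (-1 : ℝ) ^ (t - s) * (if ε = η then 1 else 0) * η ^ n * γ ^ (-(n : ℤ)) *
          q ^ (-(s * n) : ℤ) * (1 - q) ^ (-(n : ℤ)) * qBinom q n (t - s).toNat *
          q ^ (-(((t - s) * (t - s - 1)) / 2 + (t - s) * ((n : ℤ) - t + s)) : ℤ)) ∧
    ((s < (t : ℤ) - n ∨ t < s ∨ ε ≠ η) →
      (qDeriv q)^[n] (qdelta q γ η t) (ε * γ * q ^ s) = 0) := by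
  obtain ⟨hq0, hq1⟩ := hq
  rw [qDeriv_iterate_qdelta hq0 hq1 hγ.ne' hε hη]
  constructor
  · intro hts hst
    by_cases hεη : ε = η
    · subst hεη
      rw [if_pos ⟨rfl, hts, hst⟩, if_pos rfl, rydeCoeff_toNat_div_pow hε γ hts hst]
      ring
    · rw [if_neg fun h => hεη h.1, if_neg hεη]
      ring
  · intro hout
    refine if_neg fun ⟨hεη, hts, hst⟩ => ?_
    rcases hout with h | h | h
    · omega
    · omega
    · exact h hεη
end
end

section
/- The q-Gaussian e_{q²}(-X²) is of strict left type 1/2 on L(γ) for every γ > 0: there exists b > 0 with ν_{e,γ}(e_{q²}(-X²)) = O(q^{e²/4} b^e) as e → ∞, where ν_{e,γ}(f) = q^{(e²+e)/2} ∫_γ |f(x) x^e| d_q x. More precisely one has ν_{r,γ}(e_{q²}(-X²)) ≤ 2 q^{-1/4} c_q(γ) q^{r²/4} for all r ≥ 0. -/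
open scoped BigOperators

noncomputable section

/-!
The q-Gaussian satisfies `G(q y) = (1 + y²) G(y)`. Iterating this bounds `y^(2n) G(y)` by
`G(q^n y)`: `q^(n(n-1)) y^(2n) G(y) ≤ G(q^n y)`, and similarly for odd powers. Shifting the lattice
sum defining `ν_r` by `⌈r/2⌉` steps therefore bounds it termwise by `q^(⌊r/2⌋(⌊r/2⌋+1))` times the
sum defining `c_q(γ)`, and `⌊r/2⌋(⌊r/2⌋+1) ≥ (r² - 1)/4`.
-/

lemma multipliable_one_add_mul_geometric (c : ℝ) {p : ℝ} (hp : |p| < 1) :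
    Multipliable fun j : ℕ => 1 + c * p ^ j :=
  Real.multipliable_one_add_of_summable ((summable_geometric_of_abs_lt_one hp).mul_left c)

lemma one_le_tprod_one_add_mul_pow {c p : ℝ} (hc : 0 ≤ c) (hp : 0 ≤ p) :
    1 ≤ ∏' j : ℕ, (1 + c * p ^ j) := by
  by_cases h : Multipliable fun j : ℕ => 1 + c * p ^ j
  · exact le_hasProd_of_le_prod h.hasProd
      fun _ => Finset.one_le_prod fun j _ => le_add_of_nonneg_right (by positivity)
  · rw [tprod_eq_one_of_not_multipliable h]

lemma qGauss_eq (q x : ℝ) : qGauss q x = 1 / ∏' j : ℕ, (1 + x ^ 2 * (q ^ 2) ^ j) := by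
  rw [qGauss, qPochInf]
  congr 1
  exact tprod_congr fun j => by ring

lemma qGauss_pos (q x : ℝ) : 0 < qGauss q x := by
  rw [qGauss_eq]
  have := one_le_tprod_one_add_mul_pow (sq_nonneg x) (sq_nonneg q)
  positivity

lemma qGauss_le_one (q x : ℝ) : qGauss q x ≤ 1 := by
  rw [qGauss_eq]
  have h := one_le_tprod_one_add_mul_pow (sq_nonneg x) (sq_nonneg q)
  exact div_le_one_of_le₀ h (zero_le_one.trans h)

lemma qGauss_neg (q x : ℝ) : qGauss q (-x) = qGauss q x := by
  simp only [qGauss, neg_sq]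

lemma qGauss_q_mul {q : ℝ} (hq : |q| < 1) (y : ℝ) :
    qGauss q (q * y) = (1 + y ^ 2) * qGauss q y := by
  have hq2 : |q ^ 2| < 1 := by rw [abs_pow]; exact pow_lt_one₀ (abs_nonneg q) hq two_ne_zero
  have hshift : ∀ j : ℕ, (q * y) ^ 2 * (q ^ 2) ^ j = y ^ 2 * (q ^ 2) ^ (j + 1) := fun j => by ring
  have hpeel : ∏' j : ℕ, (1 + y ^ 2 * (q ^ 2) ^ j)
      = (1 + y ^ 2) * ∏' j : ℕ, (1 + (q * y) ^ 2 * (q ^ 2) ^ j) := by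
    have hm : Multipliable fun j : ℕ => 1 + y ^ 2 * (q ^ 2) ^ (j + 1) :=
      (multipliable_one_add_mul_geometric ((q * y) ^ 2) hq2).congr fun j => by rw [hshift]
    rw [tprod_eq_zero_mul' (f := fun j : ℕ => 1 + y ^ 2 * (q ^ 2) ^ j) hm]
    simp only [hshift, pow_zero, mul_one]
  rw [qGauss_eq, qGauss_eq, hpeel]
  have : (1 + y ^ 2) ≠ 0 := by positivity
  field_simp

lemma sq_mul_qGauss_le_one {q : ℝ} (hq : |q| < 1) (y : ℝ) : y ^ 2 * qGauss q y ≤ 1 := by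
  have h := qGauss_le_one q (q * y)
  rw [qGauss_q_mul hq] at h
  nlinarith [qGauss_pos q y]

section

variable {q : ℝ}

lemma pow_mul_qGauss_le_qGauss_pow_mul (hq0 : 0 ≤ q) (hq1 : q < 1) (y : ℝ) (n : ℕ) :
    q ^ (n * n) * y ^ (2 * n) * qGauss q y ≤ q ^ n * qGauss q (q ^ n * y) := by
  induction n with
  | zero => simp
  | succ n ih =>
    have hstep := qGauss_q_mul (abs_lt.mpr ⟨by linarith, hq1⟩) (q ^ n * y)
    calc q ^ ((n + 1) * (n + 1)) * y ^ (2 * (n + 1)) * qGauss q y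
        = q ^ (2 * n + 1) * y ^ 2 * (q ^ (n * n) * y ^ (2 * n) * qGauss q y) := by ring
      _ ≤ q ^ (2 * n + 1) * y ^ 2 * (q ^ n * qGauss q (q ^ n * y)) := by gcongr
      _ = q ^ (n + 1) * ((q ^ n * y) ^ 2 * qGauss q (q ^ n * y)) := by ring
      _ ≤ q ^ (n + 1) * ((1 + (q ^ n * y) ^ 2) * qGauss q (q ^ n * y)) := by
          gcongr
          · exact (qGauss_pos q _).le
          · linarith
      _ = q ^ (n + 1) * qGauss q (q ^ (n + 1) * y) := by
          rw [← hstep, pow_succ', mul_assoc q (q ^ n) y]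

lemma pow_mul_qGauss_le_qGauss_pow_succ_mul (hq0 : 0 ≤ q) (hq1 : q < 1) (y : ℝ) (n : ℕ) :
    q ^ (n * (n + 2)) * y ^ (2 * n + 1) * qGauss q y ≤ q ^ n * qGauss q (q ^ (n + 1) * y) := by
  have hstep : y * qGauss q y ≤ qGauss q (q * y) := by
    rw [qGauss_q_mul (abs_lt.mpr ⟨by linarith, hq1⟩)]
    exact mul_le_mul_of_nonneg_right (by nlinarith [sq_nonneg (y - 1)]) (qGauss_pos q y).le
  calc q ^ (n * (n + 2)) * y ^ (2 * n + 1) * qGauss q y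
      = q ^ (n * n) * (q * y) ^ (2 * n) * (y * qGauss q y) := by ring
    _ ≤ q ^ (n * n) * (q * y) ^ (2 * n) * qGauss q (q * y) :=
        mul_le_mul_of_nonneg_left hstep
          (mul_nonneg (pow_nonneg hq0 _) ((even_two_mul n).pow_nonneg _))
    _ ≤ q ^ n * qGauss q (q ^ n * (q * y)) := pow_mul_qGauss_le_qGauss_pow_mul hq0 hq1 _ n
    _ = q ^ n * qGauss q (q ^ (n + 1) * y) := by rw [pow_succ, mul_assoc]

lemma exists_moment_term_le_shift (hq0 : 0 ≤ q) (hq1 : q < 1) (r : ℕ) :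
    ∃ s : ℕ, ∀ y, 0 ≤ y → q ^ (r * (r + 1) / 2) * y ^ (r + 1) * qGauss q y ≤
      q ^ (r / 2 * (r / 2 + 1)) * (q ^ s * y * qGauss q (q ^ s * y)) := by
  obtain ⟨m, rfl | rfl⟩ := Nat.even_or_odd' r
  · refine ⟨m, fun y hy => ?_⟩
    rw [show 2 * m * (2 * m + 1) = 2 * (m * (2 * m + 1)) by ring, Nat.mul_div_cancel_left _ two_pos,
      Nat.mul_div_cancel_left _ two_pos]
    calc q ^ (m * (2 * m + 1)) * y ^ (2 * m + 1) * qGauss q y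
        = q ^ (m * (m + 1)) * y * (q ^ (m * m) * y ^ (2 * m) * qGauss q y) := by ring
      _ ≤ q ^ (m * (m + 1)) * y * (q ^ m * qGauss q (q ^ m * y)) :=
          mul_le_mul_of_nonneg_left (pow_mul_qGauss_le_qGauss_pow_mul hq0 hq1 y m) (by positivity)
      _ = q ^ (m * (m + 1)) * (q ^ m * y * qGauss q (q ^ m * y)) := by ring
  · refine ⟨m + 1, fun y hy => ?_⟩
    rw [show (2 * m + 1) * (2 * m + 1 + 1) = 2 * ((2 * m + 1) * (m + 1)) by ring,
      Nat.mul_div_cancel_left _ two_pos, show (2 * m + 1) / 2 = m by omega]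
    calc q ^ ((2 * m + 1) * (m + 1)) * y ^ (2 * m + 1 + 1) * qGauss q y
        = q ^ (m * (m + 1) + 1) * y * (q ^ (m * (m + 2)) * y ^ (2 * m + 1) * qGauss q y) := by
          ring
      _ ≤ q ^ (m * (m + 1) + 1) * y * (q ^ m * qGauss q (q ^ (m + 1) * y)) :=
          mul_le_mul_of_nonneg_left (pow_mul_qGauss_le_qGauss_pow_succ_mul hq0 hq1 y m)
            (by positivity)
      _ = q ^ (m * (m + 1)) * (q ^ (m + 1) * y * qGauss q (q ^ (m + 1) * y)) := by ring

lemma pow_half_mul_succ_le_rpow (hq0 : 0 < q) (hq1 : q ≤ 1) (r : ℕ) :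
    q ^ (r / 2 * (r / 2 + 1)) ≤ q ^ (-(1 / 4 : ℝ)) * q ^ ((r : ℝ) ^ 2 / 4) := by
  rw [← Real.rpow_natCast, ← Real.rpow_add hq0]
  refine Real.rpow_le_rpow_of_exponent_ge hq0 hq1 ?_
  have hr : (r : ℝ) ≤ 2 * (r / 2 : ℕ) + 1 := by exact_mod_cast (by omega : r ≤ 2 * (r / 2) + 1)
  push_cast
  nlinarith [Nat.cast_nonneg (α := ℝ) r]

end

lemma tsum_le_tsum_of_le_comp_add {f g : ℤ → ℝ} (s : ℤ) (hf : ∀ k, 0 ≤ f k)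
    (hfg : ∀ k, f k ≤ g (k + s)) (hg : Summable g) : ∑' k, f k ≤ ∑' k, g k := by
  have hgs : Summable fun k => g (k + s) := hg.comp_injective (add_left_injective s)
  calc ∑' k, f k ≤ ∑' k, g (k + s) := (hgs.of_nonneg_of_le hf hfg).tsum_le_tsum hfg hgs
    _ = ∑' k, g k := (Equiv.addRight s).tsum_eq g

lemma qInt_eq_of_even {f : ℝ → ℝ} (hf : Function.Even f) (q γ : ℝ) :
    qInt q γ f = 2 * (1 - q) * ∑' k : ℤ, q ^ k * γ * f (q ^ k * γ) := by
  simp only [qInt, hf _, mul_assoc, ← tsum_mul_left]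
  exact tsum_congr fun k => by ring

section

variable {q γ : ℝ}

lemma mul_qGauss_le_inv (hq : |q| < 1) {y : ℝ} (hy : 0 < y) : y * qGauss q y ≤ y⁻¹ := by
  calc y * qGauss q y = y ^ 2 * qGauss q y * y⁻¹ := by field_simp
    _ ≤ 1 * y⁻¹ := by gcongr; exact sq_mul_qGauss_le_one hq y
    _ = y⁻¹ := one_mul _

lemma summable_lattice_mul_qGauss (hq0 : 0 < q) (hq1 : q < 1) (hγ : 0 < γ) :
    Summable fun k : ℤ => q ^ k * γ * qGauss q (q ^ k * γ) := by
  have hnonneg : ∀ k : ℤ, 0 ≤ q ^ k * γ * qGauss q (q ^ k * γ) := fun k =>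
    mul_nonneg (by positivity) (qGauss_pos q _).le
  have hgeom := summable_geometric_of_lt_one hq0.le hq1
  refine .of_nat_of_neg ((hgeom.mul_right γ).of_nonneg_of_le (fun n => hnonneg n) fun n => ?_)
    ((hgeom.div_const γ).of_nonneg_of_le (fun n => hnonneg _) fun n => ?_)
  · rw [zpow_natCast]
    exact mul_le_of_le_one_right (by positivity) (qGauss_le_one q _)
  · refine (mul_qGauss_le_inv (abs_lt.mpr ⟨by linarith, hq1⟩) (by positivity)).trans_eq ?_
    rw [zpow_neg, zpow_natCast]
    field_simp

lemma qInt_qGauss_pos (hq0 : 0 < q) (hq1 : q < 1) (hγ : 0 < γ) : 0 < qInt q γ (qGauss q) := by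
  rw [qInt_eq_of_even (qGauss_neg q)]
  have hsum := (summable_lattice_mul_qGauss hq0 hq1 hγ).tsum_pos
    (fun k => mul_nonneg (by positivity) (qGauss_pos q _).le) 0
    (mul_pos (by positivity) (qGauss_pos q _))
  have : 0 < 1 - q := by linarith
  positivity

lemma qNu_qGauss_eq (hq0 : 0 < q) (hγ : 0 < γ) (r : ℕ) :
    qNu q γ r (qGauss q) = 2 * (1 - q) *
      ∑' k : ℤ, q ^ (r * (r + 1) / 2) * (q ^ k * γ) ^ (r + 1) * qGauss q (q ^ k * γ) := by
  have heven : Function.Even fun x => |qGauss q x * x ^ r| := fun x => by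
    simp only [qGauss_neg, abs_mul, abs_pow, abs_neg]
  rw [qNu, qInt_eq_of_even heven, ← tsum_mul_left, ← tsum_mul_left, ← tsum_mul_left]
  refine tsum_congr fun k => ?_
  have hy : 0 < q ^ k * γ := by positivity
  rw [abs_of_pos (mul_pos (qGauss_pos q _) (pow_pos hy r))]
  ring

lemma qNu_qGauss_le (hq0 : 0 < q) (hq1 : q < 1) (hγ : 0 < γ) (r : ℕ) :
    qNu q γ r (qGauss q) ≤ q ^ (-(1 / 4 : ℝ)) * q ^ ((r : ℝ) ^ 2 / 4) * qInt q γ (qGauss q) := by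
  obtain ⟨s, hs⟩ := exists_moment_term_le_shift hq0.le hq1 r
  have hsum := summable_lattice_mul_qGauss hq0 hq1 hγ
  have hshift : ∑' k : ℤ, q ^ (r * (r + 1) / 2) * (q ^ k * γ) ^ (r + 1) * qGauss q (q ^ k * γ) ≤
      q ^ (r / 2 * (r / 2 + 1)) * ∑' k : ℤ, q ^ k * γ * qGauss q (q ^ k * γ) := by
    rw [← tsum_mul_left]
    refine tsum_le_tsum_of_le_comp_add s (fun k => mul_nonneg (by positivity) (qGauss_pos q _).le)
      (fun k => ?_) (hsum.mul_left _)
    have hk : q ^ (k + s) * γ = q ^ s * (q ^ k * γ) := by rw [zpow_add₀ hq0.ne', zpow_natCast]; ring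
    rw [hk]
    exact hs _ (by positivity)
  rw [qNu_qGauss_eq hq0 hγ, qInt_eq_of_even (qGauss_neg q)]
  have h1q : 0 ≤ 2 * (1 - q) := by linarith
  have hS : 0 ≤ ∑' k : ℤ, q ^ k * γ * qGauss q (q ^ k * γ) :=
    tsum_nonneg fun k => mul_nonneg (by positivity) (qGauss_pos q _).le
  calc 2 * (1 - q) * ∑' k : ℤ, q ^ (r * (r + 1) / 2) * (q ^ k * γ) ^ (r + 1) * qGauss q (q ^ k * γ)
      ≤ 2 * (1 - q) * (q ^ (r / 2 * (r / 2 + 1)) * ∑' k : ℤ, q ^ k * γ * qGauss q (q ^ k * γ)) :=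
        mul_le_mul_of_nonneg_left hshift h1q
    _ ≤ 2 * (1 - q) * (q ^ (-(1 / 4 : ℝ)) * q ^ ((r : ℝ) ^ 2 / 4) *
          ∑' k : ℤ, q ^ k * γ * qGauss q (q ^ k * γ)) :=
        mul_le_mul_of_nonneg_left (mul_le_mul_of_nonneg_right
          (pow_half_mul_succ_le_rpow hq0 hq1.le r) hS) h1q
    _ = _ := by ring

end

/-- The q-Gaussian is of strict left type 1/2. -/
theorem stmt6 (q γ : ℝ) (hq : q ∈ Set.Ioo (0 : ℝ) 1) (hγ : 0 < γ) :
    (∀ r : ℕ, qNu q γ r (qGauss q) ≤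
      2 * q ^ (-(1 / 4 : ℝ)) * qInt q γ (qGauss q) * q ^ (((r : ℝ) ^ 2) / 4)) ∧
    (∃ b > (0 : ℝ), ∃ C > (0 : ℝ), ∀ e : ℕ,
      qNu q γ e (qGauss q) ≤ C * q ^ (((e : ℝ) ^ 2) / 4) * b ^ e) := by
  obtain ⟨hq0, hq1⟩ := hq
  have hc := qInt_qGauss_pos hq0 hq1 hγ
  have hbound : ∀ r : ℕ, qNu q γ r (qGauss q) ≤
      2 * q ^ (-(1 / 4 : ℝ)) * qInt q γ (qGauss q) * q ^ (((r : ℝ) ^ 2) / 4) := fun r => by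
    have hpos : 0 < q ^ (-(1 / 4 : ℝ)) * q ^ ((r : ℝ) ^ 2 / 4) * qInt q γ (qGauss q) := by
      positivity
    linarith [qNu_qGauss_le hq0 hq1 hγ r]
  refine ⟨hbound, 1, one_pos, 2 * q ^ (-(1 / 4 : ℝ)) * qInt q γ (qGauss q), by positivity,
    fun e => ?_⟩
  rw [one_pow, mul_one]
  exact hbound e
end
end

section
/- Approximation of the identity: let f be q-integrable on L(γ) with entire moment generating series and ∫_γ f = 1, set f_k = q^{-k} Q^{-k} f (so f_k(x) = q^{-k}f(q^{-k}x)). Then μ_{l,γ}(f_k) = q^{kl} μ_{l,γ}(f); and if g is defined with all q-derivatives on a domain Ω with |∂^k g(x)| = O(R_x^k) for each x, then (f_l *_γ g)(x) → g(x) pointwise on Ω as l → ∞; the convergence is uniform when the bound R_x can be chosen uniformly in x. -/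
open scoped BigOperators

noncomputable section

/-!
Rescaling `f` to `f_l(x) = q^{-l} f(q^{-l} x)` leaves the q-integral invariant (it only shifts
the lattice `L(γ)`), so the `e`-th moment picks up the factor `q^{le}` from `x^e`. Hence the `e`-th
term of the series for `f_l *_γ g` is `(q^l)^e` times the corresponding term for `f`; the term
`e = 0` is `g(x)` because `∫_γ f = 1`, and the others are dominated by `q^l` times the convergent
series `C Σ |μ_e(f)| R^e / [e]_q!`.
-/

open Filter Topology

lemma abs_tsum_pow_mul_sub_le {a b : ℕ → ℝ} (hb : Summable b) (hab : ∀ e, |a e| ≤ b e)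
    {r : ℝ} (hr0 : 0 ≤ r) (hr1 : r ≤ 1) :
    |∑' e, r ^ e * a e - a 0| ≤ r * ∑' e, b e := by
  have hb0 : ∀ e, 0 ≤ b e := fun e => (abs_nonneg _).trans (hab e)
  have hbound : ∀ n e, ‖r ^ n * a e‖ ≤ b e := fun n e => by
    rw [Real.norm_eq_abs, abs_mul, abs_of_nonneg (pow_nonneg hr0 n)]
    exact (mul_le_of_le_one_left (abs_nonneg _) (pow_le_one₀ hr0 hr1)).trans (hab e)
  have hbound' : ∀ e, ‖r ^ (e + 1) * a (e + 1)‖ ≤ r * b (e + 1) := fun e => by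
    rw [pow_succ', mul_assoc, norm_mul, Real.norm_of_nonneg hr0]
    exact mul_le_mul_of_nonneg_left (hbound e (e + 1)) hr0
  have hbs : Summable fun e => b (e + 1) := (summable_nat_add_iff 1).2 hb
  have hsum : Summable fun e => r ^ e * a e := hb.of_norm_bounded fun e => hbound e e
  have hsum1 : Summable fun e => ‖r ^ (e + 1) * a (e + 1)‖ :=
    (hbs.mul_left r).of_nonneg_of_le (fun _ => norm_nonneg _) hbound'
  rw [hsum.tsum_eq_zero_add, pow_zero, one_mul, add_sub_cancel_left, ← Real.norm_eq_abs]
  calc ‖∑' e, r ^ (e + 1) * a (e + 1)‖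
      ≤ ∑' e, r * b (e + 1) :=
        (norm_tsum_le_tsum_norm hsum1).trans (hsum1.tsum_le_tsum hbound' (hbs.mul_left r))
    _ ≤ r * ∑' e, b e := by
        rw [tsum_mul_left, hb.tsum_eq_zero_add]
        exact mul_le_mul_of_nonneg_left (le_add_of_nonneg_left (hb0 0)) hr0

lemma tendstoUniformlyOn_of_dist_le {α β ι : Type*} [PseudoMetricSpace β] {p : Filter ι}
    {F : ι → α → β} {f : α → β} {s : Set α} {u : ι → ℝ} (hu : Tendsto u p (𝓝 0))
    (hFf : ∀ n, ∀ x ∈ s, dist (F n x) (f x) ≤ u n) : TendstoUniformlyOn F f p s := by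
  rw [Metric.tendstoUniformlyOn_iff]
  intro ε hε
  filter_upwards [hu.eventually (gt_mem_nhds hε)] with n hn x hx
  rw [dist_comm]
  exact (hFf n x hx).trans_lt hn

section

variable {q γ : ℝ}

lemma qInt_const_mul (c : ℝ) (h : ℝ → ℝ) : qInt q γ (fun x => c * h x) = c * qInt q γ h := by
  simp only [qInt, ← mul_add, mul_left_comm _ c, tsum_mul_left]

lemma qInt_zpow_dilate (hq : q ≠ 0) (k : ℤ) (h : ℝ → ℝ) :
    qInt q γ (fun x => q ^ (-k) * h (q ^ (-k) * x)) = qInt q γ h := by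
  set F : ℤ → ℝ := fun j => q ^ j * γ * (h (q ^ j * γ) + h (-(q ^ j * γ)))
  have hshift : ∀ j : ℤ, q ^ (-k) * (q ^ j * γ) = q ^ (j - k) * γ := fun j => by
    rw [← mul_assoc, ← zpow_add₀ hq, neg_add_eq_sub]
  unfold qInt
  congr 1
  calc ∑' j : ℤ, q ^ j * γ * (q ^ (-k) * h (q ^ (-k) * (q ^ j * γ))
          + q ^ (-k) * h (q ^ (-k) * -(q ^ j * γ)))
      = ∑' j : ℤ, F (j - k) := tsum_congr fun j => by
        show _ = q ^ (j - k) * γ * (h (q ^ (j - k) * γ) + h (-(q ^ (j - k) * γ)))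
        rw [mul_neg, hshift, zpow_sub₀ hq, zpow_neg]
        ring
    _ = ∑' j : ℤ, F j := (Equiv.subRight k).tsum_eq F

lemma qMoment_zpow_dilate (hq : q ≠ 0) (l k : ℕ) (f : ℝ → ℝ) :
    qMoment q γ l (fun x => q ^ (-(k : ℤ)) * f (q ^ (-(k : ℤ)) * x)) =
      q ^ (k * l) * qMoment q γ l f := by
  have hcancel : q ^ (k * l) * (q ^ (-(k : ℤ))) ^ l = 1 := by
    rw [zpow_neg, zpow_natCast, inv_pow, ← pow_mul, mul_inv_cancel₀ (pow_ne_zero _ hq)]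
  have hdil := qInt_zpow_dilate (γ := γ) hq k (fun y => f y * y ^ l)
  beta_reduce at hdil
  calc qMoment q γ l (fun x => q ^ (-(k : ℤ)) * f (q ^ (-(k : ℤ)) * x))
      = q ^ (l * (l + 1) / 2) * qInt q γ (fun x => q ^ (k * l) *
          (q ^ (-(k : ℤ)) * (f (q ^ (-(k : ℤ)) * x) * (q ^ (-(k : ℤ)) * x) ^ l))) := by
        unfold qMoment
        congr 2
        funext x
        linear_combination (-(q ^ (-(k : ℤ)) * f (q ^ (-(k : ℤ)) * x) * x ^ l)) * hcancel
    _ = q ^ (k * l) * qMoment q γ l f := by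
        rw [qInt_const_mul, hdil, qMoment]
        ring

lemma qMoment_zero (f : ℝ → ℝ) : qMoment q γ 0 f = qInt q γ f := by
  simp [qMoment]

lemma qFact_zero : qFact q 0 = 1 := by
  simp [qFact, qPoch]

lemma qFact_pos (hq : q ∈ Set.Ioo (0 : ℝ) 1) (e : ℕ) : 0 < qFact q e := by
  obtain ⟨hq0, hq1⟩ := hq
  refine div_pos (Finset.prod_pos fun j _ => ?_) (pow_pos (sub_pos.2 hq1) e)
  rw [← pow_succ', sub_pos]
  exact pow_lt_one₀ hq0.le hq1 j.succ_ne_zero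

end

section

variable {q γ : ℝ} {f g : ℝ → ℝ}

lemma qConv_zpow_dilate (hq : q ≠ 0) (l : ℕ) (x : ℝ) :
    qConv q γ (fun y => q ^ (-(l : ℤ)) * f (q ^ (-(l : ℤ)) * y)) g x =
      ∑' e, (q ^ l) ^ e * ((-1) ^ e * qMoment q γ e f / qFact q e * (qDeriv q)^[e] g x) :=
  tsum_congr fun e => by
    rw [qMoment_zpow_dilate hq, ← pow_mul]
    ring

lemma abs_qConv_zpow_dilate_sub_le (hq : q ∈ Set.Ioo (0 : ℝ) 1) (hf1 : qInt q γ f = 1)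
    {R C x : ℝ} (hfR : Summable fun e => |qMoment q γ e f| * R ^ e / qFact q e)
    (hg : ∀ e, |(qDeriv q)^[e] g x| ≤ C * R ^ e) (l : ℕ) :
    |qConv q γ (fun y => q ^ (-(l : ℤ)) * f (q ^ (-(l : ℤ)) * y)) g x - g x| ≤
      q ^ l * ∑' e, C * (|qMoment q γ e f| * R ^ e / qFact q e) := by
  have hterm : ∀ e, |(-1) ^ e * qMoment q γ e f / qFact q e * (qDeriv q)^[e] g x| ≤
      C * (|qMoment q γ e f| * R ^ e / qFact q e) := fun e => by
    have hfact := qFact_pos hq e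
    rw [abs_mul, abs_div, abs_mul, abs_pow, abs_neg, abs_one, one_pow, one_mul,
      abs_of_pos hfact]
    calc |qMoment q γ e f| / qFact q e * |(qDeriv q)^[e] g x|
        ≤ |qMoment q γ e f| / qFact q e * (C * R ^ e) :=
          mul_le_mul_of_nonneg_left (hg e) (by positivity)
      _ = C * (|qMoment q γ e f| * R ^ e / qFact q e) := by ring
  have hterm0 : (-1) ^ 0 * qMoment q γ 0 f / qFact q 0 * (qDeriv q)^[0] g x = g x := by
    simp [qMoment_zero, hf1, qFact_zero]
  rw [qConv_zpow_dilate hq.1.ne', ← hterm0]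
  exact abs_tsum_pow_mul_sub_le (hfR.mul_left C) hterm (pow_nonneg hq.1.le l)
    (pow_le_one₀ hq.1.le hq.2.le)

lemma tendstoUniformlyOn_qConv_zpow_dilate (hq : q ∈ Set.Ioo (0 : ℝ) 1) (hf1 : qInt q γ f = 1)
    {R C : ℝ} (hfR : Summable fun e => |qMoment q γ e f| * R ^ e / qFact q e) {Ω : Set ℝ}
    (hg : ∀ x ∈ Ω, ∀ e, |(qDeriv q)^[e] g x| ≤ C * R ^ e) :
    TendstoUniformlyOn
      (fun l : ℕ => fun x => qConv q γ (fun y => q ^ (-(l : ℤ)) * f (q ^ (-(l : ℤ)) * y)) g x)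
      g atTop Ω := by
  refine tendstoUniformlyOn_of_dist_le ?_ fun l x hx =>
    (abs_qConv_zpow_dilate_sub_le hq hf1 hfR (hg x hx) l).trans_eq (mul_comm _ _)
  simpa using (tendsto_pow_atTop_nhds_zero_of_lt_one hq.1.le hq.2).const_mul
    (∑' e, C * (|qMoment q γ e f| * R ^ e / qFact q e))

end

theorem stmt16_general (q γ : ℝ) (hq : q ∈ Set.Ioo (0 : ℝ) 1)
    (f : ℝ → ℝ)
    (hfE : ∀ b : ℝ, Summable (fun l : ℕ => |qMoment q γ l f| * b ^ l / qFact q l))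
    (hf1 : qInt q γ f = 1) :
    (∀ l k : ℕ,
      qMoment q γ l (fun x => q ^ (-(k : ℤ)) * f (q ^ (-(k : ℤ)) * x)) =
        q ^ (k * l) * qMoment q γ l f) ∧
    (∀ (Ω : Set ℝ) (g : ℝ → ℝ),
      (∀ x ∈ Ω, ∃ R > (0 : ℝ), ∃ C > (0 : ℝ), ∀ e : ℕ, |(qDeriv q)^[e] g x| ≤ C * R ^ e) →
      ∀ x ∈ Ω, Filter.Tendsto
        (fun l : ℕ => qConv q γ (fun y => q ^ (-(l : ℤ)) * f (q ^ (-(l : ℤ)) * y)) g x)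
        Filter.atTop (nhds (g x))) ∧
    (∀ (Ω : Set ℝ) (g : ℝ → ℝ),
      (∃ R > (0 : ℝ), ∃ C > (0 : ℝ), ∀ x ∈ Ω, ∀ e : ℕ, |(qDeriv q)^[e] g x| ≤ C * R ^ e) →
      TendstoUniformlyOn
        (fun l : ℕ => fun x => qConv q γ (fun y => q ^ (-(l : ℤ)) * f (q ^ (-(l : ℤ)) * y)) g x)
        g Filter.atTop Ω) := by
  refine ⟨fun l k => qMoment_zpow_dilate hq.1.ne' l k f, ?_, ?_⟩
  · rintro Ω g hB x hx
    obtain ⟨R, -, C, -, hg⟩ := hB x hx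
    have hunif := tendstoUniformlyOn_qConv_zpow_dilate hq hf1 (hfE R) (Ω := {x})
      (by simpa using hg)
    exact hunif.tendsto_at rfl
  · rintro Ω g ⟨R, -, C, -, hg⟩
    exact tendstoUniformlyOn_qConv_zpow_dilate hq hf1 (hfE R) hg

/-- Approximation of the identity by q-shifted kernels. -/
theorem stmt16 (q γ : ℝ) (hq : q ∈ Set.Ioo (0 : ℝ) 1) (hγ : 0 < γ)
    (f : ℝ → ℝ)
    (hfE : ∀ b : ℝ, Summable (fun l : ℕ => |qMoment q γ l f| * b ^ l / qFact q l))
    (hf1 : qInt q γ f = 1) :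
    (∀ l k : ℕ,
      qMoment q γ l (fun x => q ^ (-(k : ℤ)) * f (q ^ (-(k : ℤ)) * x)) =
        q ^ (k * l) * qMoment q γ l f) ∧
    (∀ (Ω : Set ℝ) (g : ℝ → ℝ),
      (∀ x ∈ Ω, ∃ R > (0 : ℝ), ∃ C > (0 : ℝ), ∀ e : ℕ, |(qDeriv q)^[e] g x| ≤ C * R ^ e) →
      ∀ x ∈ Ω, Filter.Tendsto
        (fun l : ℕ => qConv q γ (fun y => q ^ (-(l : ℤ)) * f (q ^ (-(l : ℤ)) * y)) g x)
        Filter.atTop (nhds (g x))) ∧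
    (∀ (Ω : Set ℝ) (g : ℝ → ℝ),
      (∃ R > (0 : ℝ), ∃ C > (0 : ℝ), ∀ x ∈ Ω, ∀ e : ℕ, |(qDeriv q)^[e] g x| ≤ C * R ^ e) →
      TendstoUniformlyOn
        (fun l : ℕ => fun x => qConv q γ (fun y => q ^ (-(l : ℤ)) * f (q ^ (-(l : ℤ)) * y)) g x)
        g Filter.atTop Ω) :=
  stmt16_general q γ hq f hfE hf1
end
end
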